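/- arXiv:2408.12869 — 6 statements merged into one kernel-verified Lean document; each statement's English description precedes it below -/
import Mathlib

section
/- Let G be a multigraph and Y a subset of its edges. If a vertex v of G is Y-splittable and Y is not a star centered at v (i.e., some edge of Y is not incident to v), then v is an articulation vertex of the graph G_Y obtained by deleting the edges Y from G. -/
/-- A multigraph on vertex type `V` with edge type `E`: each edge has an
unordered pair of endpoints. -/
structure Multigraph (V E : Type) where
  ends : E → Sym2 V

namespace Multigraph

variable {V E : Type}

/-- Adjacency within the subgraph with edge set `F` and vertex set `S`. -/
def Adj (G : Multigraph V E) (F : Set E) (S : Set V) (a b : V) : Prop :=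
  a ∈ S ∧ b ∈ S ∧ ∃ e ∈ F, G.ends e = s(a, b)

/-- Reachability (lying in the same connected component) in the subgraph with
edge set `F` and vertex set `S`. -/
def Reach (G : Multigraph V E) (F : Set E) (S : Set V) : V → V → Prop :=
  Relation.ReflTransGen (G.Adj F S)

/-- `v` is `Y`-splittable: the auxiliary graph `H^v_Y`, whose vertices are the
connected components of `G` minus the edges `Y` and the vertex `v`, with edges
induced by `Y`-edges between components (loops for `Y`-edges within a
component), is bipartite.  This is expressed by a 2-colouring of the vertices
which is constant on the components of `G^v_Y` and proper on `Y`-edges not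
incident to `v`. -/
def Splittable (G : Multigraph V E) (Y : Set E) (v : V) : Prop :=
  ∃ c : V → Bool,
    (∀ a b : V, G.Reach (Set.univ \ Y) {v}ᶜ a b → c a = c b) ∧
    (∀ y ∈ Y, ∀ a b : V, G.ends y = s(a, b) → a ≠ v → b ≠ v → c a ≠ c b)

/-- `T` is a spanning tree of `G`: the subgraph `(V, T)` is connected and
every edge of `T` is a bridge of it. -/
def IsSpanningTree (G : Multigraph V E) (T : Set E) : Prop :=
  (∀ a b : V, G.Reach T Set.univ a b) ∧
  ∀ f ∈ T, ∃ a b : V, ¬ G.Reach (T \ {f}) Set.univ a b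

/-- The set of tree edges lying on the tree path `P_{u,w}(T)` between `u` and
`w`: a tree edge lies on this path iff deleting it separates `u` from `w`. -/
def pathEdges (G : Multigraph V E) (T : Set E) (u w : V) : Set E :=
  {f | f ∈ T ∧ ¬ G.Reach (T \ {f}) Set.univ u w}

/-- The fundamental path `P_e(T)` of an edge `e` (as a set of tree edges). -/
def fundPath (G : Multigraph V E) (T : Set E) (e : E) : Set E :=
  {f | f ∈ T ∧ ∀ a b : V, G.ends e = s(a, b) → ¬ G.Reach (T \ {f}) Set.univ a b}

/-- `v` lies on the tree path between `u` and `w`. -/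
def OnPath (G : Multigraph V E) (T : Set E) (u w v : V) : Prop :=
  v = u ∨ v = w ∨ ¬ G.Reach T {v}ᶜ u w

/-- `v` lies on the fundamental path `P_e(T)` of the edge `e`. -/
def OnFundPath (G : Multigraph V E) (T : Set E) (e : E) (v : V) : Prop :=
  ∀ a b : V, G.ends e = s(a, b) → G.OnPath T a b v

/-- The vertices covered by an edge set `F`. -/
def verts (G : Multigraph V E) (F : Set E) : Set V :=
  {v | ∃ e ∈ F, v ∈ G.ends e}

/-- `P⁻¹_{u,w}(G,T)`: the non-tree edges whose fundamental path contains the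
tree path from `u` to `w`. -/
def Pinv (G : Multigraph V E) (T : Set E) (u w : V) : Set E :=
  {e | e ∉ T ∧ G.pathEdges T u w ⊆ G.fundPath T e}

/-- A multigraph is simple if it has no loops and no parallel edges. -/
def Simple (G : Multigraph V E) : Prop :=
  (∀ e : E, ¬ (G.ends e).IsDiag) ∧ ∀ e f : E, G.ends e = G.ends f → e = f

/-- A `k`-separation: a partition of the edges into two parts, each of size at
least `k`, whose vertex sets share exactly `k` vertices. -/
def IsSep (G : Multigraph V E) (k : ℕ) (E1 E2 : Set E) : Prop :=
  E1 ∪ E2 = Set.univ ∧ Disjoint E1 E2 ∧ k ≤ E1.ncard ∧ k ≤ E2.ncard ∧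
    (G.verts E1 ∩ G.verts E2).ncard = k

/-- Tutte `k`-connectivity: connected and without `ℓ`-separations for
`1 ≤ ℓ < k`. -/
def TutteConnected (G : Multigraph V E) (k : ℕ) : Prop :=
  (∀ a b : V, G.Reach Set.univ Set.univ a b) ∧
  ∀ l : ℕ, 1 ≤ l → l < k → ¬ ∃ E1 E2 : Set E, G.IsSep l E1 E2

/-- A 2-separation with designated separating vertices `u` and `w`. -/
def IsTwoSep (G : Multigraph V E) (E1 E2 : Set E) (u w : V) : Prop :=
  E1 ∪ E2 = Set.univ ∧ Disjoint E1 E2 ∧ 2 ≤ E1.ncard ∧ 2 ≤ E2.ncard ∧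
    u ≠ w ∧ G.verts E1 ∩ G.verts E2 = {u, w}

/-- `v` is an articulation vertex of the subgraph with edge set `F`: after
removing `v` (and its incident edges), some two remaining vertices are
disconnected. -/
def ArticulationVertex (G : Multigraph V E) (F : Set E) (v : V) : Prop :=
  ∃ a b : V, a ≠ v ∧ b ≠ v ∧ ¬ G.Reach F {v}ᶜ a b

/-- The subgraph on the edge set `E1`, augmented by one new edge `{u, w}`. -/
def augment (G : Multigraph V E) (E1 : Set E) (u w : V) :
    Multigraph V (↥E1 ⊕ Unit) :=
  ⟨Sum.elim (fun e => G.ends e.1) (fun _ => s(u, w))⟩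

/-- The edge set `Q` of the intersection of the fundamental paths of all
edges in `Y`. -/
def Qedges (G : Multigraph V E) (T Y : Set E) : Set E :=
  ⋂ y ∈ Y, G.fundPath T y

theorem Splittable.not_reach {G : Multigraph V E} {Y : Set E} {v : V}
    (hsplit : G.Splittable Y v) {y : E} (hy : y ∈ Y) {a b : V} (hab : G.ends y = s(a, b))
    (ha : a ≠ v) (hb : b ≠ v) : ¬ G.Reach (Set.univ \ Y) {v}ᶜ a b := by
  obtain ⟨c, hconst, hproper⟩ := hsplit
  exact fun hreach => hproper y hy a b hab ha hb (hconst a b hreach)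

end Multigraph

/-- If `v` is `Y`-splittable and `Y` is not a star centered at `v`, then `v`
is an articulation vertex of `G` with the edges `Y` deleted. -/
theorem splittable_not_star_articulation {V E : Type} (G : Multigraph V E)
    (Y : Set E) (v : V) (hsplit : G.Splittable Y v)
    (hnotstar : ∃ y ∈ Y, v ∉ G.ends y) :
    G.ArticulationVertex (Set.univ \ Y) v := by
  obtain ⟨y, hy, hv⟩ := hnotstar
  rcases hab : G.ends y with ⟨a, b⟩
  have ha : a ≠ v := ne_of_mem_of_not_mem (hab ▸ Sym2.mem_mk_left a b) hv
  have hb : b ≠ v := ne_of_mem_of_not_mem (hab ▸ Sym2.mem_mk_right a b) hv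
  exact ⟨a, b, ha, hb, hsplit.not_reach hy hab ha hb⟩
end

section
/- Let G be a multigraph with spanning tree T and Y ⊆ E(G)\T. If a vertex v is Y-splittable, then v lies on the fundamental path P_y(T) for every edge y ∈ Y. -/
/-- If `v` is `Y`-splittable, then `v` lies on the fundamental path `P_y(T)`
of every edge `y ∈ Y`. -/
theorem splittable_on_fund_path {V E : Type} (G : Multigraph V E) (T : Set E)
    (hT : G.IsSpanningTree T) (Y : Set E) (hYT : ∀ y ∈ Y, y ∉ T) (v : V)
    (hsplit : G.Splittable Y v) :
    ∀ y ∈ Y, G.OnFundPath T y v := by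
  intro y hy a b hab
  obtain ⟨c, hc1, hc2⟩ := hsplit
  by_contra h
  unfold Multigraph.OnPath at h
  push_neg at h
  obtain ⟨hva, hvb, hreach⟩ := h
  have hmono : G.Reach (Set.univ \ Y) {v}ᶜ a b := by
    refine Relation.ReflTransGen.mono ?_ a b hreach
    rintro x z ⟨hx, hz, e, heT, he⟩
    exact ⟨hx, hz, e, ⟨trivial, fun hYe => hYT e hYe heT⟩, he⟩
  exact hc2 y hy a b hab (fun h => hva h.symm) (fun h => hvb h.symm) (hc1 a b hmono)
end

section
/- Let G be a multigraph with spanning tree T ⊆ E(G) and Y ⊆ E(G)\T. Let v be a Y-splittable vertex with bipartition (I,J) of the auxiliary graph H^v_Y. Construct G' from G by splitting v into two vertices i and j, adding a new edge r* = {i,j}, and reattaching each edge e = {u,v} ∈ δ(v) to i if (e ∈ Y xor some component h ∈ I contains u), and to j otherwise. Set T' := T ∪ {r*}. Then T' is a spanning tree of G', and for every non-tree edge e ∈ E∖T: the fundamental path P_e(T') equals P_e(T) ∪ {r*} if e ∈ Y, and equals P_e(T) otherwise. -/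
section SplitHelpers

open Multigraph

variable {V E : Type}

private lemma sym2_rep (z : Sym2 V) : ∃ a b : V, z = s(a, b) :=
  Sym2.ind (fun a b => ⟨a, b, rfl⟩) z

lemma Multigraph.adj_symm (G : Multigraph V E) {F : Set E} {S : Set V} {a b : V}
    (h : G.Adj F S a b) : G.Adj F S b a := by
  obtain ⟨ha, hb, e, he, hends⟩ := h
  exact ⟨hb, ha, e, he, by rw [hends, Sym2.eq_swap]⟩

lemma Multigraph.reach_symm (G : Multigraph V E) {F : Set E} {S : Set V} {a b : V}
    (h : G.Reach F S a b) : G.Reach F S b a :=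
  by
    induction h with
    | refl => exact Relation.ReflTransGen.refl
    | tail _ h2 ih => exact Relation.ReflTransGen.head (G.adj_symm h2) ih

lemma Multigraph.fundPath_mem_iff (G : Multigraph V E) {T : Set E} {e : E} {a b : V}
    (h : G.ends e = s(a, b)) (f : E) :
    f ∈ G.fundPath T e ↔ f ∈ T ∧ ¬ G.Reach (T \ {f}) Set.univ a b := by
  constructor
  · rintro ⟨hf, h2⟩; exact ⟨hf, h2 a b h⟩
  · rintro ⟨hf, h2⟩
    refine ⟨hf, fun p q hpq hrr => h2 ?_⟩
    rw [h] at hpq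
    rcases Sym2.eq_iff.1 hpq with ⟨rfl, rfl⟩ | ⟨rfl, rfl⟩
    · exact hrr
    · exact G.reach_symm hrr

/-- The projection of the split graph back to the original graph. -/
def splitProj (v : V) : V ⊕ Unit → V := Sum.elim id fun _ => v

@[simp] lemma splitProj_inl (v x : V) : splitProj v (Sum.inl x) = x := rfl

@[simp] lemma splitProj_inr (v : V) (u : Unit) : splitProj v (Sum.inr u) = v := rfl

open Classical in
/-- The colouring of the split graph. -/
noncomputable def splitCol (c : V → Bool) (v : V) : V ⊕ Unit → Bool :=
  Sum.elim (fun x => if x = v then true else c x) fun _ => false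

open Classical in
lemma splitCol_inl (c : V → Bool) (v x : V) :
    splitCol c v (Sum.inl x) = if x = v then true else c x := rfl

lemma splitCol_inr (c : V → Bool) (v : V) (u : Unit) :
    splitCol c v (Sum.inr u) = false := rfl

end SplitHelpers

/-- The split construction: splitting a `Y`-splittable vertex `v` into two
vertices `i := Sum.inl v` and `j := Sum.inr ()`, adding the new edge
`r* := Sum.inr ()` between them and reattaching the edges of `δ(v)` according
to the bipartition of `H^v_Y`, yields a graph `G'` with spanning tree
`T' = T ∪ {r*}` in which the fundamental path of every edge `e ∈ Y` is
`P_e(T) ∪ {r*}` and that of every other non-tree edge is unchanged. -/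
theorem split_construction {V E : Type} (G : Multigraph V E) (T : Set E)
    (hT : G.IsSpanningTree T) (Y : Set E) (hYT : ∀ y ∈ Y, y ∉ T)
    (v : V) (hloop : ∀ e : E, G.ends e ≠ s(v, v))
    (c : V → Bool)
    (hc1 : ∀ a b : V, G.Reach (Set.univ \ Y) {v}ᶜ a b → c a = c b)
    (hc2 : ∀ y ∈ Y, ∀ a b : V, G.ends y = s(a, b) → a ≠ v → b ≠ v → c a ≠ c b)
    (G' : Multigraph (V ⊕ Unit) (E ⊕ Unit))
    (hr : G'.ends (Sum.inr ()) = s(Sum.inl v, Sum.inr ()))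
    (hkeep : ∀ e : E, v ∉ G.ends e →
      G'.ends (Sum.inl e) = (G.ends e).map Sum.inl)
    (hsplitI : ∀ (e : E) (u : V), G.ends e = s(u, v) → u ≠ v →
      Xor' (e ∈ Y) (c u = true) →
      G'.ends (Sum.inl e) = s(Sum.inl u, Sum.inl v))
    (hsplitJ : ∀ (e : E) (u : V), G.ends e = s(u, v) → u ≠ v →
      ¬ Xor' (e ∈ Y) (c u = true) →
      G'.ends (Sum.inl e) = s(Sum.inl u, Sum.inr ())) :
    G'.IsSpanningTree (Sum.inl '' T ∪ {Sum.inr ()}) ∧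
    ∀ e : E, e ∉ T →
      (e ∈ Y →
        G'.fundPath (Sum.inl '' T ∪ {Sum.inr ()}) (Sum.inl e) =
          Sum.inl '' G.fundPath T e ∪ {Sum.inr ()}) ∧
      (e ∉ Y →
        G'.fundPath (Sum.inl '' T ∪ {Sum.inr ()}) (Sum.inl e) =
          Sum.inl '' G.fundPath T e) := by
  classical
  have hTnotY : ∀ f ∈ T, f ∉ Y := fun f hf hfY => hYT f hfY hf
  have h0 : ∀ e : E, v ∉ G.ends e ∨ ∃ u : V, u ≠ v ∧ G.ends e = s(u, v) := by
    intro e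
    by_cases hv : v ∈ G.ends e
    · right
      obtain ⟨u, hu⟩ := Sym2.mem_iff_exists.1 hv
      refine ⟨u, fun h => hloop e (by rw [hu, h]), by rw [hu, Sym2.eq_swap]⟩
    · exact Or.inl hv
  have hprojends : ∀ e : E, Sym2.map (splitProj v) (G'.ends (Sum.inl e)) = G.ends e := by
    intro e
    rcases h0 e with hv | ⟨u, huv, hu⟩
    · obtain ⟨p, q, hpq⟩ := sym2_rep (G.ends e)
      rw [hkeep e hv, hpq, Sym2.map_pair_eq, Sym2.map_pair_eq]
      rfl
    · by_cases hx : Xor' (e ∈ Y) (c u = true)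
      · rw [hsplitI e u hu huv hx, Sym2.map_pair_eq]
        exact hu.symm
      · rw [hsplitJ e u hu huv hx, Sym2.map_pair_eq]
        exact hu.symm
  have hreachproj : ∀ (F : Set E) (a' b' : V ⊕ Unit),
      G'.Reach (Sum.inl '' F ∪ {Sum.inr ()}) Set.univ a' b' →
      G.Reach F Set.univ (splitProj v a') (splitProj v b') := by
    intro F a' b' h
    induction h with
    | refl => exact Relation.ReflTransGen.refl
    | tail h1 h2 ih =>
      obtain ⟨-, -, e', he', hend⟩ := h2
      rcases he' with ⟨e, he, rfl⟩ | he'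
      · refine ih.tail ⟨trivial, trivial, e, he, ?_⟩
        rw [← hprojends e, hend, Sym2.map_pair_eq]
      · have he'' : e' = Sum.inr () := he'
        rw [he'', hr] at hend
        rcases Sym2.eq_iff.1 hend with ⟨rfl, rfl⟩ | ⟨rfl, rfl⟩ <;> exact ih
  have hlift : ∀ (F : Set E) (x y : V), G.Reach F Set.univ x y →
      G'.Reach (Sum.inl '' F ∪ {Sum.inr ()}) Set.univ (Sum.inl x) (Sum.inl y) := by
    intro F x y h
    have hedge : ∀ e ∈ F, ∀ p q : V, G.ends e = s(p, q) →
        G'.Reach (Sum.inl '' F ∪ {Sum.inr ()}) Set.univ (Sum.inl p) (Sum.inl q) := by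
      intro e he p q hpq
      rcases h0 e with hv | ⟨u, huv, hu⟩
      · exact Relation.ReflTransGen.single
          ⟨trivial, trivial, Sum.inl e, Or.inl ⟨e, he, rfl⟩, by
            rw [hkeep e hv, hpq, Sym2.map_pair_eq]⟩
      · have huv' : G'.Reach (Sum.inl '' F ∪ {Sum.inr ()}) Set.univ
            (Sum.inl u) (Sum.inl v) := by
          by_cases hx : Xor' (e ∈ Y) (c u = true)
          · exact Relation.ReflTransGen.single
              ⟨trivial, trivial, Sum.inl e, Or.inl ⟨e, he, rfl⟩, hsplitI e u hu huv hx⟩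
          · refine Relation.ReflTransGen.head
              ⟨trivial, trivial, Sum.inl e, Or.inl ⟨e, he, rfl⟩, hsplitJ e u hu huv hx⟩ ?_
            exact Relation.ReflTransGen.single
              ⟨trivial, trivial, Sum.inr (), Or.inr rfl, by rw [hr]; exact Sym2.eq_swap⟩
        rw [hu] at hpq
        rcases Sym2.eq_iff.1 hpq with ⟨rfl, rfl⟩ | ⟨rfl, rfl⟩
        · exact huv'
        · exact G'.reach_symm huv'
    induction h with
    | refl => exact Relation.ReflTransGen.refl
    | tail h1 h2 ih =>
      obtain ⟨-, -, e, he, hend⟩ := h2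
      exact ih.trans (hedge e he _ _ hend)
  have hconnector : ∀ (X : Set (E ⊕ Unit)), Sum.inr () ∈ X →
      ∀ a' : V ⊕ Unit, G'.Reach X Set.univ a' (Sum.inl (splitProj v a')) := by
    rintro X hX (x | ⟨⟩)
    · exact Relation.ReflTransGen.refl
    · exact Relation.ReflTransGen.single
        ⟨trivial, trivial, Sum.inr (), hX, by rw [hr]; exact Sym2.eq_swap⟩
  have hinv : ∀ a' b' : V ⊕ Unit, G'.Adj (Sum.inl '' T) Set.univ a' b' →
      splitCol c v a' = splitCol c v b' := by
    rintro a' b' ⟨-, -, _, ⟨e, he, rfl⟩, hend⟩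
    have heY : e ∉ Y := hTnotY e he
    rcases h0 e with hv | ⟨u, huv, hu⟩
    · obtain ⟨p, q, hpq⟩ := sym2_rep (G.ends e)
      have hp : p ≠ v := by
        rintro rfl
        exact hv (by rw [hpq]; exact Sym2.mem_iff.mpr (Or.inl rfl))
      have hq : q ≠ v := by
        rintro rfl
        exact hv (by rw [hpq]; exact Sym2.mem_iff.mpr (Or.inr rfl))
      have hcpq : c p = c q := hc1 p q (Relation.ReflTransGen.single
        ⟨by simpa using hp, by simpa using hq, e, ⟨trivial, heY⟩, hpq⟩)
      have hend' : s(Sum.inl p, Sum.inl q) = s(a', b') := by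
        rw [← hend, hkeep e hv, hpq, Sym2.map_pair_eq]
      rcases Sym2.eq_iff.1 hend' with ⟨rfl, rfl⟩ | ⟨rfl, rfl⟩ <;>
        simp [splitCol_inl, hp, hq, hcpq]
    · by_cases hx : Xor' (e ∈ Y) (c u = true)
      · have hcu : c u = true := by
          rcases hx with ⟨hY, -⟩ | ⟨hcu, -⟩
          · exact absurd hY heY
          · exact hcu
        have hend' : s(Sum.inl u, Sum.inl v) = s(a', b') := by
          rw [← hend, hsplitI e u hu huv hx]
        rcases Sym2.eq_iff.1 hend' with ⟨rfl, rfl⟩ | ⟨rfl, rfl⟩ <;>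
          simp [splitCol_inl, huv, hcu]
      · have hcu : c u = false := by
          have h' := hx
          rw [show Xor' = Xor from rfl, xor_iff_not_iff, not_not] at h'
          cases hcc : c u with
          | false => rfl
          | true => exact absurd (h'.2 hcc) heY
        have hend' : s(Sum.inl u, Sum.inr ()) = s(a', b') := by
          rw [← hend, hsplitJ e u hu huv hx]
        rcases Sym2.eq_iff.1 hend' with ⟨rfl, rfl⟩ | ⟨rfl, rfl⟩ <;>
          simp [splitCol_inl, splitCol_inr, huv, hcu]
  have hinvR : ∀ a' b' : V ⊕ Unit, G'.Reach (Sum.inl '' T) Set.univ a' b' →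
      splitCol c v a' = splitCol c v b' := by
    intro a' b' h
    induction h with
    | refl => rfl
    | tail h1 h2 ih => exact ih.trans (hinv _ _ h2)
  have hattach : ∀ x : V, x ≠ v →
      G'.Reach (Sum.inl '' T) Set.univ (Sum.inl x)
        (cond (c x) (Sum.inl v) (Sum.inr ())) := by
    intro x hx
    have key : ∀ y : V, G.Reach T Set.univ v y → y = v ∨ (y ≠ v ∧
        G'.Reach (Sum.inl '' T) Set.univ (Sum.inl y)
          (cond (c y) (Sum.inl v) (Sum.inr ()))) := by
      intro y h
      induction h with
      | refl => exact Or.inl rfl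
      | @tail b z h1 h2 ih =>
        by_cases hz : z = v
        · exact Or.inl hz
        right
        refine ⟨hz, ?_⟩
        obtain ⟨-, -, e, he, hend⟩ := h2
        have heY : e ∉ Y := hTnotY e he
        rcases ih with rfl | ⟨hbv, hb⟩
        · have hu : G.ends e = s(z, b) := by rw [hend]; exact Sym2.eq_swap
          by_cases hcz : c z = true
          · rw [hcz]
            exact Relation.ReflTransGen.single
              ⟨trivial, trivial, Sum.inl e, ⟨e, he, rfl⟩,
                hsplitI e z hu hz (Or.inr ⟨hcz, heY⟩)⟩
          · have hcz' : c z = false := by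
              cases hcc : c z with
              | false => rfl
              | true => exact absurd hcc hcz
            rw [hcz']
            refine Relation.ReflTransGen.single
              ⟨trivial, trivial, Sum.inl e, ⟨e, he, rfl⟩, hsplitJ e z hu hz ?_⟩
            rw [show Xor' = Xor from rfl, xor_iff_not_iff, not_not]
            simp [heY, hcz]
        · have hvz : v ∉ G.ends e := by
            rw [hend, Sym2.mem_iff]
            push_neg
            exact ⟨Ne.symm hbv, Ne.symm hz⟩
          have hcbz : c b = c z := hc1 b z (Relation.ReflTransGen.single
            ⟨by simpa using hbv, by simpa using hz, e, ⟨trivial, heY⟩, hend⟩)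
          have hstep : G'.Adj (Sum.inl '' T) Set.univ (Sum.inl b) (Sum.inl z) :=
            ⟨trivial, trivial, Sum.inl e, ⟨e, he, rfl⟩, by
              rw [hkeep e hvz, hend, Sym2.map_pair_eq]⟩
          rw [← hcbz]
          exact (G'.reach_symm (Relation.ReflTransGen.single hstep)).trans hb
    rcases key x (hT.1 v x) with rfl | ⟨-, h⟩
    · exact absurd rfl hx
    · exact h
  have hrho : ∀ a' : V ⊕ Unit, G'.Reach (Sum.inl '' T) Set.univ a'
      (cond (splitCol c v a') (Sum.inl v) (Sum.inr ())) := by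
    rintro (x | ⟨⟩)
    · by_cases hx : x = v
      · subst hx
        rw [splitCol_inl, if_pos rfl]
        exact Relation.ReflTransGen.refl
      · rw [splitCol_inl, if_neg hx]
        exact hattach x hx
    · exact Relation.ReflTransGen.refl
  have hchar : ∀ a' b' : V ⊕ Unit,
      G'.Reach (Sum.inl '' T) Set.univ a' b' ↔ splitCol c v a' = splitCol c v b' := by
    intro a' b'
    constructor
    · exact hinvR a' b'
    · intro h
      refine (hrho a').trans ?_
      rw [h]
      exact G'.reach_symm (hrho b')
  have hTd1 : (Sum.inl '' T ∪ {Sum.inr ()}) \ {(Sum.inr () : E ⊕ Unit)}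
      = Sum.inl '' T := by
    ext x
    rcases x with e | ⟨⟩ <;> simp
  have hTd2 : ∀ f : E, (Sum.inl '' T ∪ {Sum.inr ()}) \ {(Sum.inl f : E ⊕ Unit)} =
      Sum.inl '' (T \ {f}) ∪ {Sum.inr ()} := by
    intro f
    ext x
    rcases x with e | ⟨⟩ <;> simp
  have hmemT' : ∀ f : E,
      (Sum.inl f ∈ Sum.inl '' T ∪ {(Sum.inr () : E ⊕ Unit)}) ↔ f ∈ T := by
    intro f; simp
  refine ⟨⟨?_, ?_⟩, ?_⟩
  · -- connectivity of T'
    intro a' b'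
    have h1 := hconnector (Sum.inl '' T ∪ {Sum.inr ()}) (Or.inr rfl) a'
    have h2 := hconnector (Sum.inl '' T ∪ {Sum.inr ()}) (Or.inr rfl) b'
    exact (h1.trans (hlift T _ _ (hT.1 _ _))).trans (G'.reach_symm h2)
  · -- every edge of T' is a bridge
    intro f' hf'
    rcases hf' with ⟨f, hf, rfl⟩ | hf'
    · obtain ⟨a, b, hab⟩ := hT.2 f hf
      refine ⟨Sum.inl a, Sum.inl b, fun hre => hab ?_⟩
      rw [hTd2 f] at hre
      exact hreachproj (T \ {f}) _ _ hre
    · have hf'' : f' = Sum.inr () := hf'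
      subst hf''
      refine ⟨Sum.inl v, Sum.inr (), fun hre => ?_⟩
      rw [hTd1] at hre
      have := hinvR _ _ hre
      simp [splitCol_inl, splitCol_inr] at this
  · -- fundamental paths
    intro e heT
    have main : ∀ a' b' : V ⊕ Unit, G'.ends (Sum.inl e) = s(a', b') →
        ((splitCol c v a' = splitCol c v b') ↔ e ∉ Y) →
        (e ∈ Y → G'.fundPath (Sum.inl '' T ∪ {Sum.inr ()}) (Sum.inl e) =
            Sum.inl '' G.fundPath T e ∪ {Sum.inr ()}) ∧
        (e ∉ Y → G'.fundPath (Sum.inl '' T ∪ {Sum.inr ()}) (Sum.inl e) =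
            Sum.inl '' G.fundPath T e) := by
      intro a' b' hend hcc
      have hend2 : G.ends e = s(splitProj v a', splitProj v b') := by
        rw [← hprojends e, hend, Sym2.map_pair_eq]
      have krs : (Sum.inr () ∈ G'.fundPath (Sum.inl '' T ∪ {Sum.inr ()}) (Sum.inl e))
          ↔ e ∈ Y := by
        rw [G'.fundPath_mem_iff hend, hTd1]
        constructor
        · rintro ⟨-, hnr⟩
          by_contra hY
          exact hnr ((hchar a' b').2 (hcc.2 hY))
        · intro hY
          refine ⟨Or.inr rfl, fun hre => ?_⟩
          exact (hcc.1 ((hchar a' b').1 hre)) hY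
      have kf : ∀ f : E,
          (Sum.inl f ∈ G'.fundPath (Sum.inl '' T ∪ {Sum.inr ()}) (Sum.inl e)) ↔
          f ∈ G.fundPath T e := by
        intro f
        rw [G'.fundPath_mem_iff hend, G.fundPath_mem_iff hend2, hTd2 f, hmemT' f]
        constructor
        · rintro ⟨hfT, hnr⟩
          refine ⟨hfT, fun hre => hnr ?_⟩
          have h1 := hconnector (Sum.inl '' (T \ {f}) ∪ {Sum.inr ()}) (Or.inr rfl) a'
          have h2 := hconnector (Sum.inl '' (T \ {f}) ∪ {Sum.inr ()}) (Or.inr rfl) b'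
          exact (h1.trans (hlift (T \ {f}) _ _ hre)).trans (G'.reach_symm h2)
        · rintro ⟨hfT, hnr⟩
          exact ⟨hfT, fun hre => hnr (hreachproj (T \ {f}) _ _ hre)⟩
      constructor
      · intro hY
        ext x
        rcases x with f | ⟨⟩
        · rw [kf f]
          constructor
          · intro h
            exact Or.inl ⟨f, h, rfl⟩
          · rintro (⟨g, hg, hgf⟩ | h)
            · obtain rfl := Sum.inl_injective hgf
              exact hg
            · exact absurd (Set.mem_singleton_iff.1 h) Sum.inl_ne_inr
        · exact ⟨fun _ => Or.inr rfl, fun _ => krs.2 hY⟩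
      · intro hY
        ext x
        rcases x with f | ⟨⟩
        · rw [kf f]
          constructor
          · intro h
            exact ⟨f, h, rfl⟩
          · rintro ⟨g, hg, hgf⟩
            obtain rfl := Sum.inl_injective hgf
            exact hg
        · constructor
          · intro h
            exact absurd (krs.1 h) hY
          · rintro ⟨g, -, hg⟩
            exact absurd hg Sum.inl_ne_inr
    rcases h0 e with hv | ⟨u, huv, hu⟩
    · obtain ⟨p, q, hpq⟩ := sym2_rep (G.ends e)
      have hp : p ≠ v := by
        rintro rfl
        exact hv (by rw [hpq]; exact Sym2.mem_iff.mpr (Or.inl rfl))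
      have hq : q ≠ v := by
        rintro rfl
        exact hv (by rw [hpq]; exact Sym2.mem_iff.mpr (Or.inr rfl))
      have hend : G'.ends (Sum.inl e) = s(Sum.inl p, Sum.inl q) := by
        rw [hkeep e hv, hpq, Sym2.map_pair_eq]
      refine main _ _ hend ?_
      by_cases hY : e ∈ Y
      · have := hc2 e hY p q hpq hp hq
        simp [splitCol_inl, hp, hq, hY, this]
      · have : c p = c q := hc1 p q (Relation.ReflTransGen.single
          ⟨by simpa using hp, by simpa using hq, e, ⟨trivial, hY⟩, hpq⟩)
        simp [splitCol_inl, hp, hq, hY, this]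
    · by_cases hx : Xor' (e ∈ Y) (c u = true)
      · refine main _ _ (hsplitI e u hu huv hx) ?_
        rcases hx with ⟨hY, hnc⟩ | ⟨hcu, hnY⟩
        · simp [splitCol_inl, huv, hY, hnc]
        · simp [splitCol_inl, huv, hcu, hnY]
      · refine main _ _ (hsplitJ e u hu huv hx) ?_
        rw [show Xor' = Xor from rfl, xor_iff_not_iff, not_not] at hx
        by_cases hY : e ∈ Y
        · have := hx.1 hY
          simp [splitCol_inl, splitCol_inr, huv, hY, this]
        · have hcu : c u = false := by
            cases hcc : c u with
            | false => rfl
            | true => exact absurd (hx.2 hcc) hY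
          simp [splitCol_inl, splitCol_inr, huv, hY, hcu]
end

section
/- Let M be a {0,1}-matrix and b a {0,1} row vector of matching width, and let M' be M with row bᵀ appended. Let Y be the set of columns where b has a 1. Then M' is graphic if and only if there exists a graph G with spanning tree T such that M = M(G,T) and G has a Y-splittable vertex (identifying Y with the corresponding non-tree edges of G). -/
/-- `M` is the representation matrix of the graph–tree pair `(G, T)`, with
rows indexed by the tree edges via `r` and columns indexed by the non-tree
edges via `c`: the `(i,j)` entry is `1` iff the tree edge `r i` lies on the
fundamental path of the non-tree edge `c j`. -/
def RepMatrix {V E ρ κ : Type} (G : Multigraph V E) (T : Set E)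
    (r : ρ → E) (c : κ → E) (M : ρ → κ → Bool) : Prop :=
  G.IsSpanningTree T ∧
  (∀ i, r i ∈ T) ∧ Function.Injective r ∧ (∀ f ∈ T, ∃ i, r i = f) ∧
  (∀ j, c j ∉ T) ∧ Function.Injective c ∧ (∀ f, f ∉ T → ∃ j, c j = f) ∧
  (∀ i j, M i j = true ↔ r i ∈ G.fundPath T (c j))

/-- A binary matrix is graphic if it is the representation matrix of some
graph–tree pair. -/
def Graphic {ρ κ : Type} (M : ρ → κ → Bool) : Prop :=
  ∃ (V E : Type) (G : Multigraph V E) (T : Set E) (r : ρ → E) (c : κ → E),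
    RepMatrix G T r c M

namespace Multigraph

variable {V E : Type} {G : Multigraph V E} {F S : Set E} {Sv : Set V}

lemma Adj.symm' {a b : V} (h : G.Adj F Sv a b) : G.Adj F Sv b a := by
  obtain ⟨ha, hb, e, he, hee⟩ := h
  exact ⟨hb, ha, e, he, by rwa [Sym2.eq_swap]⟩

lemma Reach.symm' {a b : V} (h : G.Reach F Sv a b) : G.Reach F Sv b a :=
  by
    induction h with
    | refl => exact Relation.ReflTransGen.refl
    | tail _ hadj ih => exact Relation.ReflTransGen.head hadj.symm' ih

lemma Reach.single' {a b : V} (h : G.Adj F Sv a b) : G.Reach F Sv a b :=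
  Relation.ReflTransGen.single h

lemma Reach.mono' {F' : Set E} (hF : F ⊆ F') {a b : V} (h : G.Reach F Sv a b) :
    G.Reach F' Sv a b :=
  by
    induction h with
    | refl => exact Relation.ReflTransGen.refl
    | tail _ hadj ih =>
      obtain ⟨ha, hb, e, he, hee⟩ := hadj
      exact Relation.ReflTransGen.tail ih ⟨ha, hb, e, hF he, hee⟩

lemma ends_eq_elim {e : E} {p q a b : V} (h1 : G.ends e = s(p, q))
    (h2 : G.ends e = s(a, b)) : (a = p ∧ b = q) ∨ (a = q ∧ b = p) := by
  rw [h1, Sym2.eq_iff] at h2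
  tauto

lemma exists_ends (e : E) : ∃ p q : V, G.ends e = s(p, q) :=
  Sym2.ind (fun p q => ⟨p, q, rfl⟩) (G.ends e)

/-- If the endpoints of `f` are joined in `F \ {f}`, then `f` is removable. -/
lemma reach_drop {f : E} {p q : V} (hends : G.ends f = s(p, q))
    (hpq : G.Reach (F \ {f}) Sv p q) {a b : V} (h : G.Reach F Sv a b) :
    G.Reach (F \ {f}) Sv a b := by
  induction h with
  | refl => exact Relation.ReflTransGen.refl
  | tail _ hadj ih =>
    rename_i m w _
    obtain ⟨hm, hw, e, he, hee⟩ := hadj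
    by_cases hef : e = f
    · subst hef
      rcases ends_eq_elim hends hee with ⟨rfl, rfl⟩ | ⟨rfl, rfl⟩
      · exact ih.trans hpq
      · exact ih.trans hpq.symm'
    · exact ih.trans (Reach.single' ⟨hm, hw, e, ⟨he, hef⟩, hee⟩)

/-- Loops are removable. -/
lemma reach_drop_loop {f : E} {w0 : V} (hends : G.ends f = s(w0, w0))
    {a b : V} (h : G.Reach F Sv a b) : G.Reach (F \ {f}) Sv a b := by
  induction h with
  | refl => exact Relation.ReflTransGen.refl
  | tail _ hadj ih =>
    rename_i m w _
    obtain ⟨hm, hw, e, he, hee⟩ := hadj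
    by_cases hef : e = f
    · subst hef
      rcases ends_eq_elim hends hee with ⟨rfl, rfl⟩ | ⟨rfl, rfl⟩ <;> exact ih
    · exact ih.trans (Reach.single' ⟨hm, hw, e, ⟨he, hef⟩, hee⟩)

/-- Strong bridge property of spanning-tree edges. -/
lemma strong_bridge {T : Set E} (hT : G.IsSpanningTree T) {f : E} (hf : f ∈ T)
    {p q : V} (hends : G.ends f = s(p, q)) :
    ¬ G.Reach (T \ {f}) Set.univ p q := by
  intro hpq
  obtain ⟨a, b, hab⟩ := hT.2 f hf
  exact hab (reach_drop hends hpq (hT.1 a b))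

lemma tree_edge_not_loop {T : Set E} (hT : G.IsSpanningTree T) {f : E} (hf : f ∈ T)
    {w0 : V} (hends : G.ends f = s(w0, w0)) : False := by
  obtain ⟨a, b, hab⟩ := hT.2 f hf
  exact hab (reach_drop_loop hends (hT.1 a b))

/-- Dichotomy after removing one edge. -/
lemma reach_dichotomy {f : E} {x y : V} (hends : G.ends f = s(x, y))
    {a b : V} (h : G.Reach F Set.univ a b) :
    G.Reach (F \ {f}) Set.univ a b ∨
      ((G.Reach (F \ {f}) Set.univ a x ∨ G.Reach (F \ {f}) Set.univ a y) ∧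
       (G.Reach (F \ {f}) Set.univ x b ∨ G.Reach (F \ {f}) Set.univ y b)) := by
  induction h with
  | refl => exact Or.inl Relation.ReflTransGen.refl
  | tail _ hadj ih =>
    rename_i m w _
    obtain ⟨hm, hw, e, he, hee⟩ := hadj
    by_cases hef : e = f
    · subst hef
      right
      rcases ends_eq_elim hends hee with ⟨rfl, rfl⟩ | ⟨rfl, rfl⟩
      · refine ⟨?_, Or.inr Relation.ReflTransGen.refl⟩
        rcases ih with h1 | ⟨h1, _⟩
        · exact Or.inl h1
        · exact h1
      · refine ⟨?_, Or.inl Relation.ReflTransGen.refl⟩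
        rcases ih with h1 | ⟨h1, _⟩
        · exact Or.inr h1
        · exact h1
    · have step : G.Reach (F \ {f}) Set.univ m w :=
        Reach.single' ⟨hm, hw, e, ⟨he, hef⟩, hee⟩
      rcases ih with h1 | ⟨h1, h2⟩
      · exact Or.inl (h1.trans step)
      · refine Or.inr ⟨h1, ?_⟩
        rcases h2 with h2 | h2
        · exact Or.inl (h2.trans step)
        · exact Or.inr (h2.trans step)

lemma reach_to_side {f : E} {x y : V} (hends : G.ends f = s(x, y))
    {a : V} (h : G.Reach F Set.univ a x) :
    G.Reach (F \ {f}) Set.univ a x ∨ G.Reach (F \ {f}) Set.univ a y := by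
  rcases reach_dichotomy hends h with h1 | ⟨h1, _⟩
  · exact Or.inl h1
  · exact h1

end Multigraph
namespace GRAux

open Multigraph Classical

noncomputable section

variable {V0 E0 : Type}

/-- Vertices of the contraction of an edge with ends `x`, `y` (drop `y`). -/
def cVert (y : V0) : Type := {z : V0 // z ≠ y}

/-- The contraction map. -/
def cmap {x y : V0} (hxy : x ≠ y) (z : V0) : cVert y :=
  open Classical in if h : z = y then ⟨x, hxy⟩ else ⟨z, h⟩

/-- Edges of the contraction (drop `e₀`). -/
def cEdge (e₀ : E0) : Type := {e : E0 // e ≠ e₀}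

/-- The contracted multigraph. -/
def cGraph (G' : Multigraph V0 E0) (e₀ : E0) {x y : V0} (hxy : x ≠ y) :
    Multigraph (cVert y) (cEdge e₀) :=
  ⟨fun e => (G'.ends e.1).map (cmap hxy)⟩

variable {G' : Multigraph V0 E0} {e₀ : E0} {x y : V0} {hxy : x ≠ y}

lemma cmap_ne {z : V0} (hz : z ≠ y) : cmap hxy z = ⟨z, hz⟩ := by
  unfold cmap
  exact dif_neg hz

lemma cmap_x : cmap hxy x = ⟨x, hxy⟩ := cmap_ne hxy

lemma cmap_y : cmap hxy y = ⟨x, hxy⟩ := by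
  unfold cmap
  exact dif_pos rfl

lemma cmap_val (z : cVert y) : cmap hxy z.1 = z :=
  (cmap_ne z.2).trans (Subtype.ext rfl)

lemma cmap_eq_iff {z : V0} {w : cVert y} (h : cmap hxy z = w) :
    z = w.1 ∨ (z = y ∧ w.1 = x) := by
  by_cases hz : z = y
  · subst hz
    right
    exact ⟨rfl, by rw [cmap_y] at h; exact (congrArg Subtype.val h).symm⟩
  · left
    rw [cmap_ne hz] at h
    exact (congrArg Subtype.val h).symm ▸ rfl

/-- If `cmap` identifies `s` and `t`, they are joined by `e₀` (given its ends). -/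
lemma reach_of_cmap_eq (hends : G'.ends e₀ = s(x, y)) {F : Set E0} (hF : e₀ ∈ F)
    {s t : V0} (h : cmap hxy s = cmap hxy t) : G'.Reach F Set.univ s t := by
  by_cases hst : s = t
  · exact hst ▸ Relation.ReflTransGen.refl
  by_cases hs : s = y <;> by_cases ht : t = y
  · exact absurd (hs.trans ht.symm) hst
  · rw [cmap_ne ht] at h
    rw [hs, cmap_y] at h
    have : x = t := congrArg Subtype.val h
    subst hs; subst this
    exact Multigraph.Reach.single' ⟨Set.mem_univ _, Set.mem_univ _, e₀, hF, by rw [hends, Sym2.eq_swap]⟩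
  · rw [cmap_ne hs] at h
    rw [ht, cmap_y] at h
    have : s = x := congrArg Subtype.val h
    subst ht; subst this
    exact Multigraph.Reach.single' ⟨Set.mem_univ _, Set.mem_univ _, e₀, hF, hends⟩
  · rw [cmap_ne hs, cmap_ne ht] at h
    exact absurd (congrArg Subtype.val h) hst

/-- Lifting reachability to the contraction. -/
lemma reach_lift (hends : G'.ends e₀ = s(x, y)) {F : Set E0} (hF : e₀ ∈ F)
    {a b : V0} (h : G'.Reach F Set.univ a b) :
    (cGraph G' e₀ hxy).Reach {e : cEdge e₀ | e.1 ∈ F} Set.univ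
      (cmap hxy a) (cmap hxy b) := by
  induction h with
  | refl => exact Relation.ReflTransGen.refl
  | tail _ hadj ih =>
    rename_i m w _
    obtain ⟨_, _, e, he, hee⟩ := hadj
    by_cases hee0 : e = e₀
    · subst hee0
      have : cmap hxy m = cmap hxy w := by
        rcases ends_eq_elim hends hee with ⟨rfl, rfl⟩ | ⟨rfl, rfl⟩
        · rw [cmap_x, cmap_y]
        · rw [cmap_x, cmap_y]
      rwa [← this]
    · refine ih.trans (Multigraph.Reach.single' ⟨Set.mem_univ _, Set.mem_univ _, ⟨e, hee0⟩, he, ?_⟩)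
      show (G'.ends e).map (cmap hxy) = _
      rw [hee, Sym2.map_pair_eq]

/-- Projecting reachability from the contraction. -/
lemma reach_project (hends : G'.ends e₀ = s(x, y)) {F : Set E0} (hF : e₀ ∈ F)
    {z w : cVert y} (h : (cGraph G' e₀ hxy).Reach {e : cEdge e₀ | e.1 ∈ F} Set.univ z w)
    {a b : V0} (ha : cmap hxy a = z) (hb : cmap hxy b = w) :
    G'.Reach F Set.univ a b := by
  induction h generalizing b with
  | refl => exact reach_of_cmap_eq hends hF (ha.trans hb.symm)
  | tail _ hadj ih =>
    rename_i m w' _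
    obtain ⟨_, _, e, he, hee⟩ := hadj
    obtain ⟨p, q, hpq⟩ := exists_ends (G := G') e.1
    have hmap : s(cmap hxy p, cmap hxy q) = s(m, w') := by
      rw [← Sym2.map_pair_eq (cmap hxy), ← hpq]
      exact hee
    rw [Sym2.eq_iff] at hmap
    rcases hmap with ⟨hp, hq⟩ | ⟨hp, hq⟩
    · exact ((ih hp).trans (Multigraph.Reach.single' ⟨Set.mem_univ _, Set.mem_univ _, e.1, he, hpq⟩)).trans
        (reach_of_cmap_eq hends hF (hq.trans hb.symm))
    · exact ((ih hq).trans ((Multigraph.Reach.single'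
        ⟨Set.mem_univ _, Set.mem_univ _, e.1, he, hpq⟩).symm' (F := F))).trans
        (reach_of_cmap_eq hends hF (hp.trans hb.symm))

end
end GRAux
namespace GRAux

open Multigraph

lemma forward {ρ κ : Type} {M : ρ → κ → Bool} {b : κ → Bool}
    {V0 E0 : Type} (G' : Multigraph V0 E0) (T' : Set E0) (r' : ρ ⊕ Unit → E0)
    (c' : κ → E0)
    (h : RepMatrix G' T' r' c'
      (fun (i : ρ ⊕ Unit) (j : κ) => Sum.elim (fun i' => M i' j) (fun _ => b j) i)) :
    ∃ (V E : Type) (G : Multigraph V E) (T : Set E) (r : ρ → E) (c : κ → E),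
      RepMatrix G T r c M ∧
      ∃ v : V, G.Splittable {e : E | ∃ j, b j = true ∧ c j = e} v := by
  classical
  obtain ⟨hST, hr1, hr2, hr3, hc1, hc2, hc3, hM⟩ := h
  set e₀ : E0 := r' (Sum.inr ()) with he₀
  obtain ⟨x, y, hE⟩ := exists_ends (G := G') e₀
  have hxyne : x ≠ y := by
    rintro rfl
    exact tree_edge_not_loop hST (hr1 (Sum.inr ())) hE
  have hnr : ¬ G'.Reach (T' \ {e₀}) Set.univ x y := strong_bridge hST (hr1 (Sum.inr ())) hE
  have hMl : ∀ i j, M i j = true ↔ r' (Sum.inl i) ∈ G'.fundPath T' (c' j) :=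
    fun i j => hM (Sum.inl i) j
  have hMr : ∀ j, b j = true ↔ e₀ ∈ G'.fundPath T' (c' j) :=
    fun j => hM (Sum.inr ()) j
  -- the contracted graph
  refine ⟨cVert y, cEdge e₀, cGraph G' e₀ hxyne, {e : cEdge e₀ | e.1 ∈ T'},
    fun i => ⟨r' (Sum.inl i), fun hh => Sum.inl_ne_inr (hr2 hh)⟩,
    fun j => ⟨c' j, fun hh => hc1 j (hh ▸ hr1 (Sum.inr ()))⟩, ?_, ?_⟩
  case _ =>
    -- RepMatrix for the contraction
    have hTd : ∀ g : cEdge e₀,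
        {e : cEdge e₀ | e.1 ∈ T'} \ {g} = {e : cEdge e₀ | e.1 ∈ T' \ {g.1}} := by
      intro g
      ext e
      simp only [Set.mem_diff, Set.mem_setOf_eq, Set.mem_singleton_iff]
      exact ⟨fun ⟨h1, h2⟩ => ⟨h1, fun h3 => h2 (Subtype.ext h3)⟩,
        fun ⟨h1, h2⟩ => ⟨h1, fun h3 => h2 (congrArg Subtype.val h3)⟩⟩
    have he0d : ∀ g : cEdge e₀, e₀ ∈ T' \ {g.1} :=
      fun g => ⟨hr1 (Sum.inr ()), fun hh => g.2 (Set.mem_singleton_iff.1 hh).symm⟩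
    have FP : ∀ g h2 : cEdge e₀, g.1 ∈ T' →
        (g ∈ (cGraph G' e₀ hxyne).fundPath {e : cEdge e₀ | e.1 ∈ T'} h2 ↔
          g.1 ∈ G'.fundPath T' h2.1) := by
      intro g h2 hg
      constructor
      · rintro ⟨-, hall⟩
        refine ⟨hg, ?_⟩
        intro p q hpq hre
        have hlift := reach_lift (hxy := hxyne) hE (he0d g) hre
        rw [← hTd] at hlift
        exact hall (cmap hxyne p) (cmap hxyne q)
          (by show (G'.ends h2.1).map _ = _; rw [hpq, Sym2.map_pair_eq]) hlift
      · rintro ⟨-, hall⟩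
        refine ⟨hg, ?_⟩
        intro a b2 hab hre
        obtain ⟨p, q, hpq⟩ := exists_ends (G := G') h2.1
        have hmap : s(cmap hxyne p, cmap hxyne q) = s(a, b2) := by
          rw [← Sym2.map_pair_eq, ← hpq]; exact hab
        rw [Sym2.eq_iff] at hmap
        rw [hTd] at hre
        rcases hmap with ⟨hp, hq⟩ | ⟨hp, hq⟩
        · exact hall p q hpq (reach_project hE (he0d g) hre hp hq)
        · exact hall p q hpq (reach_project hE (he0d g) hre.symm' hp hq)
    refine ⟨⟨?_, ?_⟩, fun i => hr1 (Sum.inl i), ?_, ?_, fun j => hc1 j, ?_, ?_, ?_⟩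
    · -- spanning
      intro a b2
      have := reach_lift (hxy := hxyne) hE (hr1 (Sum.inr ())) (hST.1 a.1 b2.1)
      rwa [cmap_val, cmap_val] at this
    · -- bridges
      intro f hf
      obtain ⟨a, b2, hab⟩ := hST.2 f.1 hf
      refine ⟨cmap hxyne a, cmap hxyne b2, fun hre => hab ?_⟩
      rw [hTd] at hre
      exact reach_project hE (he0d f) hre rfl rfl
    · -- r injective
      intro i1 i2 hi
      exact Sum.inl_injective (hr2 (congrArg Subtype.val hi))
    · -- r surjective
      intro f hf
      obtain ⟨i', hri'⟩ := hr3 f.1 hf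
      cases i' with
      | inl i => exact ⟨i, Subtype.ext hri'⟩
      | inr u => exact absurd hri'.symm f.2
    · -- c injective
      intro j1 j2 hj
      exact hc2 (congrArg Subtype.val hj)
    · -- c surjective
      intro f hf
      obtain ⟨j, hj⟩ := hc3 f.1 hf
      exact ⟨j, Subtype.ext hj⟩
    · -- matrix condition
      intro i j
      rw [hMl i j]
      exact (FP ⟨r' (Sum.inl i), fun hh => Sum.inl_ne_inr (hr2 hh)⟩
        ⟨c' j, fun hh => hc1 j (hh ▸ hr1 (Sum.inr ()))⟩ (hr1 (Sum.inl i))).symm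
  case _ =>
    -- splittability of the contracted vertex
    have hvert : ∀ (z : cVert y) (p : V0), cmap hxyne p = z → z ≠ cmap hxyne x →
        z.1 = p := by
      intro z p hp hz
      rcases cmap_eq_iff (hxy := hxyne) hp with h1 | ⟨h1, h2⟩
      · exact h1.symm
      · exact absurd (Subtype.ext (h2.trans
          (congrArg Subtype.val (cmap_x (hxy := hxyne))).symm)) hz
    refine ⟨cmap hxyne x, fun z => decide
      (G'.Reach (T' \ {e₀}) Set.univ z.1 x), ?_, ?_⟩
    · -- constancy on components
      have step : ∀ m w : cVert y,
          (cGraph G' e₀ hxyne).Adj (Set.univ \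
              {e : cEdge e₀ | ∃ j, b j = true ∧
                (⟨c' j, fun hh => hc1 j (hh ▸ hr1 (Sum.inr ()))⟩ : cEdge e₀) = e})
            {cmap hxyne x}ᶜ m w →
          (G'.Reach (T' \ {e₀}) Set.univ m.1 x ↔ G'.Reach (T' \ {e₀}) Set.univ w.1 x) := by
        intro m w hadj
        obtain ⟨hm, hw, e, ⟨-, heY⟩, hee⟩ := hadj
        obtain ⟨p0, q0, hpq0⟩ := exists_ends (G := G') e.1
        have hmap : s(cmap hxyne p0, cmap hxyne q0) = s(m, w) := by
          rw [← Sym2.map_pair_eq, ← hpq0]; exact hee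
        rw [Sym2.eq_iff] at hmap
        have key : ∀ p q : V0, G'.ends e.1 = s(p, q) → cmap hxyne p = m →
            cmap hxyne q = w →
            (G'.Reach (T' \ {e₀}) Set.univ m.1 x ↔
              G'.Reach (T' \ {e₀}) Set.univ w.1 x) := by
          intro p q hpq hp hq
          have hmv : m.1 = p := hvert m p hp hm
          have hwv : w.1 = q := hvert w q hq hw
          have hreach : G'.Reach (T' \ {e₀}) Set.univ p q := by
            by_cases heT : e.1 ∈ T'
            · exact Multigraph.Reach.single'
                ⟨Set.mem_univ _, Set.mem_univ _, e.1, ⟨heT, e.2⟩, hpq⟩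
            · obtain ⟨j, hj⟩ := hc3 e.1 heT
              have hbj : ¬ b j = true := fun hb => heY ⟨j, hb, Subtype.ext hj⟩
              have hnf : e₀ ∉ G'.fundPath T' (c' j) := fun hmem => hbj ((hMr j).2 hmem)
              have hex : ∃ a' b', G'.ends (c' j) = s(a', b') ∧
                  G'.Reach (T' \ {e₀}) Set.univ a' b' := by
                by_contra hno
                push_neg at hno
                exact hnf ⟨hr1 (Sum.inr ()), hno⟩
              obtain ⟨a', b', hab, hrr⟩ := hex
              rw [hj] at hab
              rcases ends_eq_elim hpq hab with ⟨rfl, rfl⟩ | ⟨rfl, rfl⟩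
              · exact hrr
              · exact hrr.symm'
          rw [hmv, hwv]
          exact ⟨fun h2 => hreach.symm'.trans h2, fun h2 => hreach.trans h2⟩
        rcases hmap with ⟨hp, hq⟩ | ⟨hp, hq⟩
        · exact key p0 q0 hpq0 hp hq
        · exact key q0 p0 (by rw [hpq0, Sym2.eq_swap]) hq hp
      intro a2 b2 hre
      induction hre with
      | refl => rfl
      | tail _ hadj ih =>
        rw [ih]
        rw [decide_eq_decide]
        exact step _ _ hadj
    · -- properness on Y-edges
      intro yedge hY a2 b2 hends hnav hnbv
      obtain ⟨j, hbj, hcj⟩ := hY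
      have hfp : e₀ ∈ G'.fundPath T' (c' j) := (hMr j).1 hbj
      obtain ⟨p0, q0, hpq0⟩ := exists_ends (G := G') (c' j)
      have hval : yedge.1 = c' j := by rw [← hcj]
      have h1 : (cGraph G' e₀ hxyne).ends yedge = s(cmap hxyne p0, cmap hxyne q0) := by
        show (G'.ends yedge.1).map _ = _
        rw [hval, hpq0, Sym2.map_pair_eq]
      rw [h1, Sym2.eq_iff] at hends
      have key2 : ∀ p q : V0, G'.ends (c' j) = s(p, q) → cmap hxyne p = a2 →
          cmap hxyne q = b2 → ¬ (decide (G'.Reach (T' \ {e₀}) Set.univ a2.1 x) =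
            decide (G'.Reach (T' \ {e₀}) Set.univ b2.1 x)) := by
        intro p q hpq hp hq heq
        have hav : a2.1 = p := hvert a2 p hp hnav
        have hbv : b2.1 = q := hvert b2 q hq hnbv
        have hnpq : ¬ G'.Reach (T' \ {e₀}) Set.univ p q := hfp.2 p q hpq
        rw [decide_eq_decide, hav, hbv] at heq
        rcases reach_to_side hE (hST.1 p x) with hs1 | hs1 <;>
          rcases reach_to_side hE (hST.1 q x) with hs2 | hs2
        · exact hnpq (hs1.trans hs2.symm')
        · exact hnpq (hs1.trans (heq.1 hs1).symm')
        · exact hnpq ((heq.2 hs2).trans hs2.symm')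
        · exact hnpq (hs1.trans hs2.symm')
      rcases hends with ⟨hp, hq⟩ | ⟨hp, hq⟩
      · exact key2 p0 q0 hpq0 hp hq
      · exact key2 q0 p0 (by rw [hpq0, Sym2.eq_swap]) hq hp
end GRAux
namespace GRAux

open Multigraph

noncomputable section
open Classical

variable {V0 E0 : Type}

/-- Attachment rule for an edge `e` incident to `v` with other endpoint `w`. -/
def att (Y : Set E0) (χ : V0 → Bool) (v : V0) (e : E0) (w : V0) : V0 ⊕ Unit :=
  if e ∈ Y then (if χ w then Sum.inl v else Sum.inr ())
  else (if χ w then Sum.inr () else Sum.inl v)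

/-- Ends of an old edge in the split graph. -/
def sEnds (Y : Set E0) (χ : V0 → Bool) (v : V0) (pp qq : E0 → V0) (e : E0) :
    Sym2 (V0 ⊕ Unit) :=
  if pp e = v then
    (if qq e = v then
      (if e ∈ Y then s(Sum.inl v, Sum.inr ()) else s(Sum.inl v, Sum.inl v))
     else s(att Y χ v e (qq e), Sum.inl (qq e)))
  else if qq e = v then s(Sum.inl (pp e), att Y χ v e (pp e))
  else s(Sum.inl (pp e), Sum.inl (qq e))

/-- The split graph. -/
def sGraph (Y : Set E0) (χ : V0 → Bool) (v : V0) (pp qq : E0 → V0) :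
    Multigraph (V0 ⊕ Unit) (E0 ⊕ Unit) :=
  ⟨Sum.elim (sEnds Y χ v pp qq) (fun _ => s(Sum.inl v, Sum.inr ()))⟩

/-- The split tree. -/
def sTree (T : Set E0) : Set (E0 ⊕ Unit) :=
  {f | Sum.elim (· ∈ T) (fun _ => True) f}

/-- The 2-colouring of the split vertices. -/
def mu (χ : V0 → Bool) (v : V0) (z : V0 ⊕ Unit) : Bool :=
  Sum.elim (fun z => if z = v then false else χ z) (fun _ => true) z

/-- The copy of `v` on the side of `a`. -/
def sideV (χ : V0 → Bool) (v : V0) (a : V0) : V0 ⊕ Unit :=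
  if χ a then Sum.inr () else Sum.inl v

variable {Y : Set E0} {χ : V0 → Bool} {v : V0} {pp qq : E0 → V0}

lemma mu_sideV (a : V0) : mu χ v (sideV χ v a) = χ a := by
  by_cases h : χ a <;> simp [sideV, mu, h]

lemma mu_inl (a : V0) (ha : a ≠ v) : mu χ v (Sum.inl a) = χ a := by
  simp [mu, ha]

lemma mu_inlv : mu χ v (Sum.inl v) = false := by simp [mu]

lemma mu_inr : mu χ v (Sum.inr ()) = true := by simp [mu]

lemma att_not_mem (e : E0) (w : V0) (he : e ∉ Y) : att Y χ v e w = sideV χ v w := by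
  simp [att, sideV, he]

lemma mu_att_mem (e : E0) (w : V0) (he : e ∈ Y) : mu χ v (att Y χ v e w) = !(χ w) := by
  by_cases h : χ w <;> simp [att, mu, he, h]

lemma sideV_cases (a : V0) : sideV χ v a = Sum.inl v ∨ sideV χ v a = Sum.inr () := by
  by_cases h : χ a <;> simp [sideV, h]

lemma att_cases (e : E0) (w : V0) :
    att Y χ v e w = Sum.inl v ∨ att Y χ v e w = Sum.inr () := by
  by_cases h : e ∈ Y <;> by_cases h2 : χ w <;> simp [att, h, h2]

/-- Case analysis for `sEnds`. -/
lemma sEnds_cases (e : E0) :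
    (pp e = v ∧ qq e = v ∧
      ((e ∈ Y ∧ sEnds Y χ v pp qq e = s(Sum.inl v, Sum.inr ())) ∨
       (e ∉ Y ∧ sEnds Y χ v pp qq e = s(Sum.inl v, Sum.inl v)))) ∨
    (pp e = v ∧ qq e ≠ v ∧
      sEnds Y χ v pp qq e = s(att Y χ v e (qq e), Sum.inl (qq e))) ∨
    (pp e ≠ v ∧ qq e = v ∧
      sEnds Y χ v pp qq e = s(Sum.inl (pp e), att Y χ v e (pp e))) ∨
    (pp e ≠ v ∧ qq e ≠ v ∧
      sEnds Y χ v pp qq e = s(Sum.inl (pp e), Sum.inl (qq e))) := by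
  unfold sEnds
  split_ifs with h1 h2 h3 h4 <;> tauto

/-- Projection of the split ends. -/
lemma sEnds_map_proj (e : E0) :
    (sEnds Y χ v pp qq e).map (Sum.elim id (fun _ => v)) = s(pp e, qq e) := by
  have hatt : ∀ w, Sum.elim id (fun _ => v) (att Y χ v e w) = v := by
    intro w
    rcases att_cases (χ := χ) (v := v) e w with h | h <;> rw [h] <;> rfl
  rcases sEnds_cases (Y := Y) (χ := χ) (v := v) (pp := pp) (qq := qq) e with
    ⟨h1, h2, ⟨_, h3⟩ | ⟨_, h3⟩⟩ | ⟨h1, h2, h3⟩ | ⟨h1, h2, h3⟩ | ⟨h1, h2, h3⟩ <;>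
    rw [h3, Sym2.map_pair_eq]
  · simp only [Sum.elim_inl, Sum.elim_inr, id_eq, h1, h2]
  · simp only [Sum.elim_inl, Sum.elim_inr, id_eq, h1, h2]
  · rw [hatt]
    simp only [Sum.elim_inl, id_eq, h1]
  · rw [hatt]
    simp only [Sum.elim_inl, id_eq, h2]
  · simp only [Sum.elim_inl, id_eq]
end
end GRAux
lemma backward {ρ κ : Type} {M : ρ → κ → Bool} {b : κ → Bool}
    {V0 E0 : Type} (G : Multigraph V0 E0) (T : Set E0) (r : ρ → E0) (c : κ → E0)
    (h : RepMatrix G T r c M) (v : V0)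
    (hsp : G.Splittable {e : E0 | ∃ j, b j = true ∧ c j = e} v) :
    Graphic (fun (i : ρ ⊕ Unit) (j : κ) =>
      Sum.elim (fun i' => M i' j) (fun _ => b j) i) := by
  classical
  obtain ⟨hST, hr1, hr2, hr3, hc1, hc2, hc3, hM⟩ := h
  obtain ⟨χ, hconst, hprop⟩ := hsp
  choose pp qq hpq using fun e => Multigraph.exists_ends (G := G) e
  set Y : Set E0 := {e : E0 | ∃ j, b j = true ∧ c j = e} with hY
  have hYc : ∀ j, c j ∈ Y ↔ b j = true := by
    intro j
    constructor
    · rintro ⟨j', hb', hc'⟩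
      rwa [← hc2 hc']
    · intro hb
      exact ⟨j, hb, rfl⟩
  have hTY : ∀ e ∈ T, e ∉ Y := by
    rintro e he ⟨j, -, hcj⟩
    exact hc1 j (hcj ▸ he)
  have hχ : ∀ e ∉ Y, pp e ≠ v → qq e ≠ v → χ (pp e) = χ (qq e) := by
    intro e he hp hq
    exact hconst _ _ (Multigraph.Reach.single' ⟨hp, hq, e, ⟨Set.mem_univ _, he⟩, hpq e⟩)
  have hloopT : ∀ e ∈ T, ¬ (pp e = v ∧ qq e = v) := by
    rintro e he ⟨h1, h2⟩
    exact Multigraph.tree_edge_not_loop hST he (by rw [hpq e, h1, h2])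
  -- abbreviations
  set G' := GRAux.sGraph Y χ v pp qq with hG'
  set T' := GRAux.sTree T with hT'
  have hmemT' : ∀ e : E0, (Sum.inl e ∈ T') ↔ e ∈ T := fun e => Iff.rfl
  have hmemT'r : Sum.inr () ∈ T' := trivial
  have hadj0 : ∀ (F' : Set (E0 ⊕ Unit)), Sum.inr () ∈ F' →
      G'.Adj F' Set.univ (Sum.inl v) (Sum.inr ()) := by
    intro F' hF'
    exact ⟨Set.mem_univ _, Set.mem_univ _, Sum.inr (), hF', rfl⟩
  -- the μ-invariant on the split tree minus the new edge
  have hmuAdj : ∀ a2 b2, G'.Adj (T' \ {Sum.inr ()}) Set.univ a2 b2 →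
      GRAux.mu χ v a2 = GRAux.mu χ v b2 := by
    rintro a2 b2 ⟨-, -, f, ⟨hfT', hfne⟩, hee⟩
    cases f with
    | inr u => exact absurd rfl (by cases u; exact hfne)
    | inl e =>
      have heT : e ∈ T := hfT'
      have heY : e ∉ Y := hTY e heT
      have hee' : GRAux.sEnds Y χ v pp qq e = s(a2, b2) := hee
      rcases GRAux.sEnds_cases (Y := Y) (χ := χ) (v := v) (pp := pp) (qq := qq) e with
        ⟨h1, h2, -⟩ | ⟨h1, h2, h3⟩ | ⟨h1, h2, h3⟩ | ⟨h1, h2, h3⟩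
      · exact absurd ⟨h1, h2⟩ (hloopT e heT)
      · rw [h3] at hee'
        rw [Sym2.eq_iff] at hee'
        have hm1 : GRAux.mu χ v (GRAux.att Y χ v e (qq e)) =
            GRAux.mu χ v (Sum.inl (qq e)) := by
          rw [GRAux.att_not_mem _ _ heY, GRAux.mu_sideV, GRAux.mu_inl _ h2]
        rcases hee' with ⟨ha, hb⟩ | ⟨ha, hb⟩ <;> rw [← ha, ← hb]
        · exact hm1
        · exact hm1.symm
      · rw [h3] at hee'
        rw [Sym2.eq_iff] at hee'
        have hm1 : GRAux.mu χ v (Sum.inl (pp e)) =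
            GRAux.mu χ v (GRAux.att Y χ v e (pp e)) := by
          rw [GRAux.att_not_mem _ _ heY, GRAux.mu_sideV, GRAux.mu_inl _ h1]
        rcases hee' with ⟨ha, hb⟩ | ⟨ha, hb⟩ <;> rw [← ha, ← hb]
        · exact hm1
        · exact hm1.symm
      · rw [h3] at hee'
        rw [Sym2.eq_iff] at hee'
        have hm1 : GRAux.mu χ v (Sum.inl (pp e)) = GRAux.mu χ v (Sum.inl (qq e)) := by
          rw [GRAux.mu_inl _ h1, GRAux.mu_inl _ h2]
          exact hχ e heY h1 h2
        rcases hee' with ⟨ha, hb⟩ | ⟨ha, hb⟩ <;> rw [← ha, ← hb]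
        · exact hm1
        · exact hm1.symm
  have hmu : ∀ a2 b2, G'.Reach (T' \ {Sum.inr ()}) Set.univ a2 b2 →
      GRAux.mu χ v a2 = GRAux.mu χ v b2 := by
    intro a2 b2 hre
    induction hre with
    | refl => rfl
    | tail _ hadj ih => exact ih.trans (hmuAdj _ _ hadj)
  -- every old vertex reaches its side of the split vertex in the split tree
  have hC2 : ∀ a, a ≠ v →
      G'.Reach (T' \ {Sum.inr ()}) Set.univ (Sum.inl a) (GRAux.sideV χ v a) := by
    have hstepv : ∀ e ∈ T, ∀ a, a ≠ v → G.ends e = s(a, v) →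
        G'.Reach (T' \ {Sum.inr ()}) Set.univ (Sum.inl a) (GRAux.sideV χ v a) := by
      intro e heT a ha hends
      have heY := hTY e heT
      have hmem : Sum.inl e ∈ T' \ {Sum.inr ()} := ⟨heT, by simp⟩
      rcases Multigraph.ends_eq_elim (hpq e) hends with ⟨hA, hB⟩ | ⟨hA, hB⟩ <;>
        rcases GRAux.sEnds_cases (Y := Y) (χ := χ) (v := v) (pp := pp) (qq := qq) e with
          ⟨h1, h2, -⟩ | ⟨h1, h2, h3⟩ | ⟨h1, h2, h3⟩ | ⟨h1, h2, h3⟩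
      · exact absurd (hA.trans h1) ha
      · exact absurd (hA.trans h1) ha
      · refine Multigraph.Reach.single' ⟨Set.mem_univ _, Set.mem_univ _, Sum.inl e, hmem, ?_⟩
        show GRAux.sEnds Y χ v pp qq e = _
        rw [h3, GRAux.att_not_mem _ _ heY, ← hA]
      · exact absurd hB.symm h2
      · exact absurd (hA.trans h2) ha
      · refine (Multigraph.Reach.single'
          ⟨Set.mem_univ _, Set.mem_univ _, Sum.inl e, hmem, ?_⟩).symm'
        show GRAux.sEnds Y χ v pp qq e = _
        rw [h3, GRAux.att_not_mem _ _ heY, ← hA]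
      · exact absurd hB.symm h1
      · exact absurd hB.symm h1
    have hstepT : ∀ e ∈ T, ∀ a m, a ≠ v → m ≠ v → G.ends e = s(a, m) →
        G'.Reach (T' \ {Sum.inr ()}) Set.univ (Sum.inl a) (Sum.inl m) := by
      intro e heT a m ha hm hends
      have hmem : Sum.inl e ∈ T' \ {Sum.inr ()} := ⟨heT, by simp⟩
      rcases Multigraph.ends_eq_elim (hpq e) hends with ⟨hA, hB⟩ | ⟨hA, hB⟩ <;>
        rcases GRAux.sEnds_cases (Y := Y) (χ := χ) (v := v) (pp := pp) (qq := qq) e with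
          ⟨h1, h2, -⟩ | ⟨h1, h2, h3⟩ | ⟨h1, h2, h3⟩ | ⟨h1, h2, h3⟩
      · exact absurd (hA.trans h1) ha
      · exact absurd (hA.trans h1) ha
      · exact absurd (hB.trans h2) hm
      · refine Multigraph.Reach.single' ⟨Set.mem_univ _, Set.mem_univ _, Sum.inl e, hmem, ?_⟩
        show GRAux.sEnds Y χ v pp qq e = _
        rw [h3, ← hA, ← hB]
      · exact absurd (hB.trans h1) hm
      · exact absurd (hB.trans h1) hm
      · exact absurd (hA.trans h2) ha
      · refine (Multigraph.Reach.single'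
          ⟨Set.mem_univ _, Set.mem_univ _, Sum.inl e, hmem, ?_⟩).symm'
        show GRAux.sEnds Y χ v pp qq e = _
        rw [h3, ← hA, ← hB]
    intro a ha
    have hre := hST.1 a v
    induction hre using Relation.ReflTransGen.head_induction_on with
    | refl => exact absurd rfl ha
    | head hadj hrest ih =>
      rename_i a' m
      obtain ⟨-, -, e, heT, hee⟩ := hadj
      by_cases hm : m = v
      · exact hstepv e heT a' ha (hm ▸ hee)
      · have hχam : χ a' = χ m :=
          hconst a' m (Multigraph.Reach.single' ⟨ha, hm, e, ⟨Set.mem_univ _, hTY e heT⟩, hee⟩)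
        have hside : GRAux.sideV χ v a' = GRAux.sideV χ v m := by
          unfold GRAux.sideV
          rw [hχam]
        rw [hside]
        exact (hstepT e heT a' m ha hm hee).trans (ih hm)
  -- projection
  have hproj : ∀ (F' : Set (E0 ⊕ Unit)) (a2 b2 : V0 ⊕ Unit),
      G'.Reach F' Set.univ a2 b2 →
      G.Reach {e : E0 | Sum.inl e ∈ F'} Set.univ
        (Sum.elim id (fun _ => v) a2) (Sum.elim id (fun _ => v) b2) := by
    intro F' a2 b2 hre
    induction hre with
    | refl => exact Relation.ReflTransGen.refl
    | tail _ hadj ih =>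
      rename_i m w _
      obtain ⟨-, -, f, hf, hee⟩ := hadj
      cases f with
      | inr u =>
        have hee' : s(Sum.inl v, Sum.inr ()) = s(m, w) := by cases u; exact hee
        rw [Sym2.eq_iff] at hee'
        have : Sum.elim id (fun _ => v) m = Sum.elim id (fun _ => v) w := by
          rcases hee' with ⟨ha, hb⟩ | ⟨ha, hb⟩ <;> rw [← ha, ← hb] <;> rfl
        rwa [← this]
      | inl e =>
        have hee' : GRAux.sEnds Y χ v pp qq e = s(m, w) := hee
        have h7 := congrArg (Sym2.map (Sum.elim id (fun _ => v))) hee'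
        rw [GRAux.sEnds_map_proj, Sym2.map_pair_eq] at h7
        exact ih.trans (Multigraph.Reach.single'
          ⟨Set.mem_univ _, Set.mem_univ _, e, hf, (hpq e).trans h7⟩)
  -- lifting
  have hlift : ∀ (F : Set E0) (F' : Set (E0 ⊕ Unit)), Sum.inr () ∈ F' →
      (∀ e ∈ F, Sum.inl e ∈ F') → ∀ a2 b2, G.Reach F Set.univ a2 b2 →
      G'.Reach F' Set.univ (Sum.inl a2) (Sum.inl b2) := by
    intro F F' hrF hsub a2 b2 hre
    have hvv : G'.Reach F' Set.univ (Sum.inl v) (Sum.inr ()) :=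
      Multigraph.Reach.single' (hadj0 F' hrF)
    have hAdj : ∀ a3 b3, G.Adj F Set.univ a3 b3 →
        G'.Reach F' Set.univ (Sum.inl a3) (Sum.inl b3) := by
      intro a3 b3 hadj
      obtain ⟨-, -, e, he, hee⟩ := hadj
      have core : G'.Reach F' Set.univ (Sum.inl (pp e)) (Sum.inl (qq e)) := by
        rcases GRAux.sEnds_cases (Y := Y) (χ := χ) (v := v) (pp := pp) (qq := qq) e with
          ⟨h1, h2, -⟩ | ⟨h1, h2, h3⟩ | ⟨h1, h2, h3⟩ | ⟨h1, h2, h3⟩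
        · rw [h1, h2]
          exact Relation.ReflTransGen.refl
        · rw [h1]
          have hpre : G'.Reach F' Set.univ (Sum.inl v) (GRAux.att Y χ v e (qq e)) := by
            rcases GRAux.att_cases (Y := Y) (χ := χ) (v := v) e (qq e) with h4 | h4 <;>
                rw [h4] <;>
              first
                | exact Relation.ReflTransGen.refl
                | exact hvv
          exact hpre.trans (Multigraph.Reach.single'
            ⟨Set.mem_univ _, Set.mem_univ _, Sum.inl e, hsub e he, h3⟩)
        · rw [h2]
          refine (Multigraph.Reach.single'
            ⟨Set.mem_univ _, Set.mem_univ _, Sum.inl e, hsub e he, h3⟩).trans ?_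
          rcases GRAux.att_cases (Y := Y) (χ := χ) (v := v) e (pp e) with h4 | h4 <;>
              rw [h4] <;>
            first
              | exact Relation.ReflTransGen.refl
              | exact hvv.symm'
        · exact Multigraph.Reach.single'
            ⟨Set.mem_univ _, Set.mem_univ _, Sum.inl e, hsub e he, h3⟩
      rcases Multigraph.ends_eq_elim (hpq e) hee with ⟨hA, hB⟩ | ⟨hA, hB⟩
      · rw [hA, hB]; exact core
      · rw [hA, hB]; exact core.symm'
    induction hre with
    | refl => exact Relation.ReflTransGen.refl
    | tail _ hadj ih => exact ih.trans (hAdj _ _ hadj)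
  -- spanning
  have hspan : ∀ a2 b2 : V0 ⊕ Unit, G'.Reach T' Set.univ a2 b2 := by
    have hall : ∀ z, G'.Reach T' Set.univ z (Sum.inl v) := by
      intro z
      cases z with
      | inr u =>
        cases u
        exact (Multigraph.Reach.single' (hadj0 T' hmemT'r)).symm'
      | inl a =>
        by_cases ha : a = v
        · exact ha ▸ Relation.ReflTransGen.refl
        · refine ((hC2 a ha).mono' Set.diff_subset).trans ?_
          rcases GRAux.sideV_cases (χ := χ) (v := v) a with hs | hs <;> rw [hs] <;>
            first
              | exact Relation.ReflTransGen.refl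
              | exact (Multigraph.Reach.single' (hadj0 T' hmemT'r)).symm'
    exact fun a2 b2 => (hall a2).trans (hall b2).symm'
  -- fundamental-path preservation for old tree edges
  have hFP : ∀ f ∈ T, ∀ e : E0,
      (Sum.inl f ∈ G'.fundPath T' (Sum.inl e) ↔ f ∈ G.fundPath T e) := by
    intro f hf e
    have hrmem : Sum.inr () ∈ T' \ {Sum.inl f} := ⟨trivial, by simp⟩
    have hvv : G'.Reach (T' \ {Sum.inl f}) Set.univ (Sum.inl v) (Sum.inr ()) :=
      Multigraph.Reach.single' (hadj0 _ hrmem)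
    constructor
    · intro hfp
      refine ⟨hf, ?_⟩
      intro a0 b0 hab hre
      have hre' : G.Reach (T \ {f}) Set.univ (pp e) (qq e) := by
        rcases Multigraph.ends_eq_elim (hpq e) hab with ⟨hA, hB⟩ | ⟨hA, hB⟩
        · exact hA ▸ hB ▸ hre
        · exact (hA ▸ hB ▸ hre).symm'
      have hsub : ∀ e' ∈ T \ {f}, Sum.inl e' ∈ T' \ {Sum.inl f} := by
        rintro e' ⟨h5, h6⟩
        exact ⟨h5, by simpa using fun hh => h6 hh⟩
      have core := hlift (T \ {f}) (T' \ {Sum.inl f}) hrmem hsub (pp e) (qq e) hre'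
      rcases GRAux.sEnds_cases (Y := Y) (χ := χ) (v := v) (pp := pp) (qq := qq) e with
        ⟨h1, h2, ⟨-, h3⟩ | ⟨-, h3⟩⟩ | ⟨h1, h2, h3⟩ | ⟨h1, h2, h3⟩ | ⟨h1, h2, h3⟩
      · exact hfp.2 (Sum.inl v) (Sum.inr ()) h3 hvv
      · exact hfp.2 (Sum.inl v) (Sum.inl v) h3 Relation.ReflTransGen.refl
      · rw [h1] at core
        refine hfp.2 (GRAux.att Y χ v e (qq e)) (Sum.inl (qq e)) h3 ?_
        refine Relation.ReflTransGen.trans ?_ core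
        rcases GRAux.att_cases (Y := Y) (χ := χ) (v := v) e (qq e) with h4 | h4 <;>
            rw [h4] <;>
          first
            | exact Relation.ReflTransGen.refl
            | exact hvv.symm'
      · rw [h2] at core
        refine hfp.2 (Sum.inl (pp e)) (GRAux.att Y χ v e (pp e)) h3 ?_
        refine Relation.ReflTransGen.trans core ?_
        rcases GRAux.att_cases (Y := Y) (χ := χ) (v := v) e (pp e) with h4 | h4 <;>
            rw [h4] <;>
          first
            | exact Relation.ReflTransGen.refl
            | exact hvv
      · exact hfp.2 (Sum.inl (pp e)) (Sum.inl (qq e)) h3 core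
    · intro hfp
      refine ⟨hf, ?_⟩
      intro a2 b2 hab hre
      have hab' : GRAux.sEnds Y χ v pp qq e = s(a2, b2) := hab
      have h7 := congrArg (Sym2.map (Sum.elim id (fun _ => v))) hab'
      rw [GRAux.sEnds_map_proj, Sym2.map_pair_eq] at h7
      have hproj' := hproj (T' \ {Sum.inl f}) a2 b2 hre
      have hsub2 : {e' : E0 | Sum.inl e' ∈ T' \ {Sum.inl f}} ⊆ T \ {f} := by
        rintro e' ⟨h5, h6⟩
        exact ⟨h5, by simpa using fun hh => h6 (by rw [hh]; rfl)⟩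
      exact hfp.2 _ _ ((hpq e).trans h7) (hproj'.mono' hsub2)
  -- the new row
  have hrow : ∀ j, (b j = true ↔ Sum.inr () ∈ G'.fundPath T' (Sum.inl (c j))) := by
    intro j
    constructor
    · intro hbj
      have heY : c j ∈ Y := (hYc j).2 hbj
      refine ⟨trivial, ?_⟩
      intro a2 b2 hab hre
      have hmm := hmu _ _ hre
      have hab' : GRAux.sEnds Y χ v pp qq (c j) = s(a2, b2) := hab
      rcases GRAux.sEnds_cases (Y := Y) (χ := χ) (v := v) (pp := pp) (qq := qq) (c j) with
        ⟨h1, h2, ⟨-, h3⟩ | ⟨hn, -⟩⟩ | ⟨h1, h2, h3⟩ | ⟨h1, h2, h3⟩ | ⟨h1, h2, h3⟩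
      · rw [h3, Sym2.eq_iff] at hab'
        rcases hab' with ⟨ha, hb⟩ | ⟨ha, hb⟩ <;> rw [← ha, ← hb] at hmm <;>
          rw [GRAux.mu_inlv, GRAux.mu_inr] at hmm <;> simp at hmm
      · exact hn heY
      · rw [h3, Sym2.eq_iff] at hab'
        have hne : GRAux.mu χ v (GRAux.att Y χ v (c j) (qq (c j))) ≠
            GRAux.mu χ v (Sum.inl (qq (c j))) := by
          rw [GRAux.mu_att_mem _ _ heY, GRAux.mu_inl _ h2]
          cases χ (qq (c j)) <;> simp
        rcases hab' with ⟨ha, hb⟩ | ⟨ha, hb⟩ <;> rw [← ha, ← hb] at hmm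
        · exact hne hmm
        · exact hne hmm.symm
      · rw [h3, Sym2.eq_iff] at hab'
        have hne : GRAux.mu χ v (Sum.inl (pp (c j))) ≠
            GRAux.mu χ v (GRAux.att Y χ v (c j) (pp (c j))) := by
          rw [GRAux.mu_att_mem _ _ heY, GRAux.mu_inl _ h1]
          cases χ (pp (c j)) <;> simp
        rcases hab' with ⟨ha, hb⟩ | ⟨ha, hb⟩ <;> rw [← ha, ← hb] at hmm
        · exact hne hmm
        · exact hne hmm.symm
      · rw [h3, Sym2.eq_iff] at hab'
        have hne : GRAux.mu χ v (Sum.inl (pp (c j))) ≠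
            GRAux.mu χ v (Sum.inl (qq (c j))) := by
          rw [GRAux.mu_inl _ h1, GRAux.mu_inl _ h2]
          exact hprop (c j) heY (pp (c j)) (qq (c j)) (hpq (c j)) h1 h2
        rcases hab' with ⟨ha, hb⟩ | ⟨ha, hb⟩ <;> rw [← ha, ← hb] at hmm
        · exact hne hmm
        · exact hne hmm.symm
    · intro hmem
      by_contra hbj
      have heY : c j ∉ Y := fun hh => hbj ((hYc j).1 hh)
      rcases GRAux.sEnds_cases (Y := Y) (χ := χ) (v := v) (pp := pp) (qq := qq) (c j) with
        ⟨h1, h2, ⟨hn, -⟩ | ⟨-, h3⟩⟩ | ⟨h1, h2, h3⟩ | ⟨h1, h2, h3⟩ | ⟨h1, h2, h3⟩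
      · exact heY hn
      · exact hmem.2 (Sum.inl v) (Sum.inl v) h3 Relation.ReflTransGen.refl
      · refine hmem.2 (GRAux.att Y χ v (c j) (qq (c j))) (Sum.inl (qq (c j))) h3 ?_
        rw [GRAux.att_not_mem _ _ heY]
        exact (hC2 (qq (c j)) h2).symm'
      · refine hmem.2 (Sum.inl (pp (c j))) (GRAux.att Y χ v (c j) (pp (c j))) h3 ?_
        rw [GRAux.att_not_mem _ _ heY]
        exact hC2 (pp (c j)) h1
      · have hside : GRAux.sideV χ v (pp (c j)) = GRAux.sideV χ v (qq (c j)) := by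
          unfold GRAux.sideV
          rw [hχ (c j) heY h1 h2]
        refine hmem.2 (Sum.inl (pp (c j))) (Sum.inl (qq (c j))) h3 ?_
        exact (hC2 (pp (c j)) h1).trans (hside ▸ (hC2 (qq (c j)) h2).symm')
  -- bridges
  have hbr : ∀ f ∈ T', ∃ a2 b2 : V0 ⊕ Unit, ¬ G'.Reach (T' \ {f}) Set.univ a2 b2 := by
    intro f hf
    cases f with
    | inr u =>
      cases u
      refine ⟨Sum.inl v, Sum.inr (), fun hre => ?_⟩
      have := hmu _ _ hre
      rw [GRAux.mu_inlv, GRAux.mu_inr] at this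
      exact Bool.false_ne_true this
    | inl f =>
      refine ⟨Sum.inl (pp f), Sum.inl (qq f), fun hre => ?_⟩
      refine Multigraph.strong_bridge hST hf (hpq f) ?_
      have := hproj _ _ _ hre
      refine this.mono' ?_
      rintro e ⟨he, hne⟩
      exact ⟨he, fun hh => hne (congrArg Sum.inl hh)⟩
  -- assemble
  refine ⟨V0 ⊕ Unit, E0 ⊕ Unit, G', T',
    Sum.elim (fun i => Sum.inl (r i)) (fun _ => Sum.inr ()),
    fun j => Sum.inl (c j), ⟨hspan, hbr⟩, ?_, ?_, ?_, fun j => hc1 j, ?_, ?_, ?_⟩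
  · -- rows land in the tree
    intro i
    cases i with
    | inl i => exact hr1 i
    | inr u => exact trivial
  · -- row indexing injective
    intro i1 i2 hi
    cases i1 with
    | inl i1 =>
      cases i2 with
      | inl i2 => exact congrArg Sum.inl (hr2 (Sum.inl_injective hi))
      | inr u2 => exact absurd hi (by simp)
    | inr u1 =>
      cases i2 with
      | inl i2 => exact absurd hi (by simp)
      | inr u2 => cases u1; cases u2; rfl
  · -- row indexing surjective
    intro f hf
    cases f with
    | inl f =>
      obtain ⟨i, hi⟩ := hr3 f hf
      exact ⟨Sum.inl i, congrArg Sum.inl hi⟩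
    | inr u => cases u; exact ⟨Sum.inr (), rfl⟩
  · -- column indexing injective
    intro j1 j2 hj
    exact hc2 (Sum.inl_injective hj)
  · -- column indexing surjective
    intro f hf
    cases f with
    | inl e =>
      obtain ⟨j, hj⟩ := hc3 e hf
      exact ⟨j, congrArg Sum.inl hj⟩
    | inr u => cases u; exact absurd hmemT'r hf
  · -- the matrix condition
    intro i j
    cases i with
    | inl i => exact (hM i j).trans (hFP (r i) (hr1 i) (c j)).symm
    | inr u => cases u; exact hrow j

/-- The matrix `M'` obtained from `M` by appending the row `bᵀ` is graphic if
and only if there is a graph–tree pair `(G, T)` realizing `M` such that `G`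
has a `Y`-splittable vertex, where `Y` is the set of non-tree edges
corresponding to the columns in which `b` has a `1`. -/
theorem graphic_row_augmentation {ρ κ : Type} (M : ρ → κ → Bool)
    (b : κ → Bool) :
    Graphic (fun (i : ρ ⊕ Unit) (j : κ) =>
      Sum.elim (fun i' => M i' j) (fun _ => b j) i) ↔
    ∃ (V E : Type) (G : Multigraph V E) (T : Set E) (r : ρ → E) (c : κ → E),
      RepMatrix G T r c M ∧
      ∃ v : V, G.Splittable {e : E | ∃ j, b j = true ∧ c j = e} v := by
  constructor
  · rintro ⟨V, E, G', T', r', c', hrep⟩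
    exact GRAux.forward G' T' r' c' hrep
  · rintro ⟨V, E, G, T, r, c, hrep, v, hsp⟩
    exact backward G T r c hrep v hsp
end

section
/- Let G be a 2-connected multigraph with spanning tree T, Y ⊆ E(G)∖T, and v a vertex of G. Then the auxiliary graph H^v_Y is connected. -/
/-!
If `a, b ≠ v` were in different components of `G - v`, the edges meeting the component `S` of `a`
and the remaining edges would form a 1-separation with separating vertex `v`: both parts contain an
edge at `v` because `G` is connected, and `v` is the only vertex they share because `S` is closed
under edges avoiding `v`. This contradicts 2-connectivity.
-/

namespace Multigraph

variable {V E : Type} (G : Multigraph V E)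

def edgesMeeting (S : Set V) : Set E :=
  {e | ∃ x ∈ S, x ∈ G.ends e}

variable {G}

theorem Reach.mem_right {F : Set E} {S : Set V} {a b : V} (h : G.Reach F S a b) (hab : a ≠ b) :
    b ∈ S := by
  rcases Relation.ReflTransGen.cases_tail h with rfl | ⟨c, -, hcb⟩
  · exact absurd rfl hab
  · exact hcb.2.1

theorem Reach.exists_boundary_edge {F : Set E} {S A : Set V} {x y : V} (h : G.Reach F S x y)
    (hx : x ∈ A) (hy : y ∉ A) : ∃ e ∈ F, ∃ p q, G.ends e = s(p, q) ∧ p ∈ A ∧ q ∉ A := by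
  induction h with
  | refl => exact absurd hx hy
  | @tail b c _ hbc ih =>
    by_cases hb : b ∈ A
    · obtain ⟨-, -, e, he, hends⟩ := hbc
      exact ⟨e, he, b, c, hends, hb, hy⟩
    · exact ih hb

section ClosedOffVertex

variable {S : Set V} {v : V}
  (hS : ∀ e p q, G.ends e = s(p, q) → p ∈ S → q ≠ v → q ∈ S)
include hS

theorem verts_edgesMeeting_inter_subset :
    G.verts (G.edgesMeeting S) ∩ G.verts (G.edgesMeeting S)ᶜ ⊆ {v} := by
  rintro x ⟨⟨f, ⟨y, hyS, hyf⟩, hxf⟩, ⟨f', hf', hxf'⟩⟩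
  by_contra hxv
  have hxS : x ∈ S := by
    by_cases hxy : x = y
    · exact hxy ▸ hyS
    · exact hS f y x ((Sym2.mem_and_mem_iff (Ne.symm hxy)).mp ⟨hyf, hxf⟩) hyS hxv
  exact hf' ⟨x, hxS, hxf'⟩

theorem exists_mem_edgesMeeting_of_reach {x y : V} (hxy : G.Reach Set.univ Set.univ x y)
    (hx : x ∈ S) (hy : y ∉ S) : ∃ e ∈ G.edgesMeeting S, v ∈ G.ends e := by
  obtain ⟨e, -, p, q, hends, hp, hq⟩ := hxy.exists_boundary_edge hx hy
  have hqv : q = v := by_contra fun hqv => hq (hS e p q hends hp hqv)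
  exact ⟨e, ⟨p, hp, by simp [hends]⟩, by simp [hends, hqv]⟩

theorem exists_notMem_edgesMeeting_of_reach {x y : V} (hxy : G.Reach Set.univ Set.univ x y)
    (hx : x ∈ S) (hy : y ∉ S) (hyv : y ≠ v) : ∃ e ∉ G.edgesMeeting S, v ∈ G.ends e := by
  obtain ⟨e, -, p, q, hends, hp, hq⟩ :=
    hxy.exists_boundary_edge (A := insert v S) (Or.inr hx) (by simp [hy, hyv])
  obtain ⟨hqv, hqS⟩ : q ≠ v ∧ q ∉ S := not_or.mp hq
  obtain rfl : p = v := hp.resolve_right fun hpS => hqS (hS e p q hends hpS hqv)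
  refine ⟨e, ?_, by simp [hends]⟩
  rintro ⟨z, hzS, hze⟩
  rw [hends, Sym2.mem_iff] at hze
  rcases hze with rfl | rfl
  exacts [hqS (hS e z q hends hzS hqv), hqS hzS]

theorem isSep_one_edgesMeeting [Finite E] {e₁ e₂ : E} (he₁ : e₁ ∈ G.edgesMeeting S)
    (he₂ : e₂ ∉ G.edgesMeeting S) (hve₁ : v ∈ G.ends e₁) (hve₂ : v ∈ G.ends e₂) :
    G.IsSep 1 (G.edgesMeeting S) (G.edgesMeeting S)ᶜ := by
  have hverts : G.verts (G.edgesMeeting S) ∩ G.verts (G.edgesMeeting S)ᶜ = {v} :=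
    (verts_edgesMeeting_inter_subset hS).antisymm
      (Set.singleton_subset_iff.mpr ⟨⟨e₁, he₁, hve₁⟩, ⟨e₂, he₂, hve₂⟩⟩)
  exact ⟨Set.union_compl_self _, disjoint_compl_right, (Set.ncard_pos).mpr ⟨e₁, he₁⟩,
    (Set.ncard_pos).mpr ⟨e₂, he₂⟩, by rw [hverts, Set.ncard_singleton]⟩

end ClosedOffVertex

theorem TutteConnected.not_isSep_one {k : ℕ} (h : G.TutteConnected k) (hk : 2 ≤ k)
    (E₁ E₂ : Set E) : ¬ G.IsSep 1 E₁ E₂ :=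
  fun hsep => h.2 1 le_rfl hk ⟨E₁, E₂, hsep⟩

end Multigraph

theorem aux_graph_connected_general {V E : Type} [Fintype E]
    (G : Multigraph V E) (h2 : G.TutteConnected 2) (v : V) :
    ∀ a b : V, a ≠ v → b ≠ v → G.Reach Set.univ {v}ᶜ a b := by
  intro a b ha hb
  by_contra hab
  set S : Set V := {x | G.Reach Set.univ {v}ᶜ a x}
  have hvS : v ∉ S := fun hv => hv.mem_right ha rfl
  have hS : ∀ e p q, G.ends e = s(p, q) → p ∈ S → q ≠ v → q ∈ S := fun e p q hends hp hq =>
    Relation.ReflTransGen.tail hp ⟨fun hpv : p = v => hvS (hpv ▸ hp), hq, e, trivial, hends⟩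
  obtain ⟨e₁, he₁, hve₁⟩ := Multigraph.exists_mem_edgesMeeting_of_reach hS (h2.1 a v) .refl hvS
  obtain ⟨e₂, he₂, hve₂⟩ :=
    Multigraph.exists_notMem_edgesMeeting_of_reach hS (h2.1 a b) .refl hab hb
  exact h2.not_isSep_one le_rfl _ _ (Multigraph.isSep_one_edgesMeeting hS he₁ he₂ hve₁ hve₂)

/-- For a 2-connected multigraph `G` with spanning tree `T`, `Y ⊆ E(G)∖T`
and a vertex `v`, the auxiliary graph `H^v_Y` is connected; equivalently, any
two vertices other than `v` are joined by a walk avoiding `v` (whose edges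
are either component edges of `G^v_Y` or `Y`-edges). -/
theorem aux_graph_connected {V E : Type} [Fintype V] [Fintype E]
    (G : Multigraph V E) (h2 : G.TutteConnected 2)
    (T : Set E) (hT : G.IsSpanningTree T)
    (Y : Set E) (hYT : ∀ y ∈ Y, y ∉ T) (v : V) :
    ∀ a b : V, a ≠ v → b ≠ v → G.Reach Set.univ {v}ᶜ a b :=
  aux_graph_connected_general G h2 v
end

section
/- Let G be a 2-connected multigraph with spanning tree T and let (E1,E2) be a 2-separation of G with separating vertices u and w such that the tree path P_{u,w}(T) lies in E1. Then every non-tree edge e ∈ E1∖T has its fundamental path P_e(T) contained in E1, and every non-tree edge e ∈ E2∖T has P_e(T) ⊆ E2 ∪ P_{u,w}(T). -/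
namespace Multigraph
variable {V E : Type}

lemma reach_symm_s8 (G : Multigraph V E) (F : Set E) {a b : V}
    (h : G.Reach F Set.univ a b) : G.Reach F Set.univ b a := by
  induction h with
  | refl => exact .refl
  | tail _ hadj ih =>
      obtain ⟨_, _, e, he, hends⟩ := hadj
      exact Relation.ReflTransGen.head ⟨trivial, trivial, e, he, by rw [hends, Sym2.eq_swap]⟩ ih

lemma reach_mono (G : Multigraph V E) {F F' : Set E} (h : F ⊆ F') {a b : V}
    (hr : G.Reach F Set.univ a b) : G.Reach F' Set.univ a b :=
  Relation.ReflTransGen.mono (r := G.Adj F Set.univ) (p := G.Adj F' Set.univ)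
    ((fun _ _ ⟨hx, hy, e, he, hends⟩ => ⟨hx, hy, e, h he, hends⟩ :
      ∀ x y, G.Adj F Set.univ x y → G.Adj F' Set.univ x y)) _ _ hr

lemma reach_of_edge (G : Multigraph V E) {F : Set E} {e : E} {a b : V}
    (he : e ∈ F) (hab : G.ends e = s(a,b)) : G.Reach F Set.univ a b :=
  Relation.ReflTransGen.single ⟨trivial, trivial, e, he, hab⟩

lemma mem_verts_left (G : Multigraph V E) {F : Set E} {a b : V} {e : E}
    (he : e ∈ F) (h : G.ends e = s(a,b)) : a ∈ G.verts F :=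
  ⟨e, he, h ▸ Sym2.mem_mk_left a b⟩

lemma mem_verts_right (G : Multigraph V E) {F : Set E} {a b : V} {e : E}
    (he : e ∈ F) (h : G.ends e = s(a,b)) : b ∈ G.verts F :=
  ⟨e, he, h ▸ Sym2.mem_mk_right a b⟩

lemma reach_delete (G : Multigraph V E) {F : Set E} {f : E} {p q : V}
    (hpq : G.ends f = s(p,q)) :
    ∀ {x y : V}, G.Reach F Set.univ x y →
      G.Reach (F \ {f}) Set.univ x y ∨
      (G.Reach (F \ {f}) Set.univ x p ∧ G.Reach (F \ {f}) Set.univ q y) ∨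
      (G.Reach (F \ {f}) Set.univ x q ∧ G.Reach (F \ {f}) Set.univ p y) := by
  intro x y h
  induction h using Relation.ReflTransGen.head_induction_on with
  | refl => exact Or.inl .refl
  | head hadj _ ih =>
      obtain ⟨_, _, g, hg, hends⟩ := hadj
      by_cases hgf : g = f
      · subst hgf
        rw [hpq] at hends
        rcases Sym2.eq_iff.mp hends with ⟨rfl, rfl⟩ | ⟨rfl, rfl⟩
        · rcases ih with h1 | ⟨h1, h2⟩ | ⟨h1, h2⟩
          · exact Or.inr (Or.inl ⟨.refl, h1⟩)
          · exact Or.inr (Or.inl ⟨.refl, h2⟩)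
          · exact Or.inl h2
        · rcases ih with h1 | ⟨h1, h2⟩ | ⟨h1, h2⟩
          · exact Or.inr (Or.inr ⟨.refl, h1⟩)
          · exact Or.inl h2
          · exact Or.inr (Or.inr ⟨.refl, h2⟩)
      · have hadj' : G.Adj (F \ {f}) Set.univ _ _ :=
          ⟨trivial, trivial, g, ⟨hg, by simp [hgf]⟩, hends⟩
        rcases ih with h1 | ⟨h1, h2⟩ | ⟨h1, h2⟩
        · exact Or.inl (Relation.ReflTransGen.head hadj' h1)
        · exact Or.inr (Or.inl ⟨Relation.ReflTransGen.head hadj' h1, h2⟩)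
        · exact Or.inr (Or.inr ⟨Relation.ReflTransGen.head hadj' h1, h2⟩)

lemma reach_cross (G : Multigraph V E) {A B : Set E} (hU : A ∪ B = Set.univ)
    {u w : V} (hV : G.verts A ∩ G.verts B ⊆ {u, w}) (F : Set E) :
    ∀ {x y : V}, G.Reach F Set.univ x y →
      G.Reach (F ∩ A) Set.univ x y ∨ G.Reach (F ∩ B) Set.univ x y ∨
      ((G.Reach F Set.univ x u ∨ G.Reach F Set.univ x w) ∧
       (G.Reach F Set.univ y u ∨ G.Reach F Set.univ y w)) := by
  intro x y h
  induction h using Relation.ReflTransGen.head_induction_on with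
  | refl => exact Or.inl .refl
  | @head x z hadj rest ih =>
      obtain ⟨_, _, g, hg, hends⟩ := hadj
      have hgAB : g ∈ A ∪ B := hU ▸ Set.mem_univ g
      have hxz : G.Reach F Set.univ x z := reach_of_edge G hg hends
      have key : ∀ (C D : Set E), g ∈ C → (G.verts C ∩ G.verts D ⊆ {u, w}) →
          G.Reach (F ∩ D) Set.univ z y →
          G.Reach (F ∩ C) Set.univ x y ∨
          ((G.Reach F Set.univ x u ∨ G.Reach F Set.univ x w) ∧
           (G.Reach F Set.univ y u ∨ G.Reach F Set.univ y w)) := by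
        intro C D hgC hVCD h2
        rcases Relation.ReflTransGen.cases_head h2 with rfl | ⟨m, hzm, _⟩
        · exact Or.inl (Relation.ReflTransGen.single ⟨trivial, trivial, g, ⟨hg, hgC⟩, hends⟩)
        · have hzC : z ∈ G.verts C := mem_verts_right G hgC hends
          have hzD : z ∈ G.verts D := by
            obtain ⟨_, _, e, he, hezm⟩ := hzm
            exact mem_verts_left G he.2 hezm
          have hzy : G.Reach F Set.univ z y := reach_mono G Set.inter_subset_left h2
          have hz := hVCD ⟨hzC, hzD⟩
          simp only [Set.mem_insert_iff, Set.mem_singleton_iff] at hz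
          rcases hz with rfl | rfl
          · exact Or.inr ⟨Or.inl hxz, Or.inl (reach_symm_s8 G F hzy)⟩
          · exact Or.inr ⟨Or.inr hxz, Or.inr (reach_symm_s8 G F hzy)⟩
      rcases hgAB with hgA | hgB
      · rcases ih with h1 | h2 | h3
        · exact Or.inl (Relation.ReflTransGen.head ⟨trivial, trivial, g, ⟨hg, hgA⟩, hends⟩ h1)
        · rcases key A B hgA hV h2 with h | h
          · exact Or.inl h
          · exact Or.inr (Or.inr h)
        · exact Or.inr (Or.inr ⟨h3.1.imp (hxz.trans) (hxz.trans), h3.2⟩)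
      · rcases ih with h1 | h2 | h3
        · rcases key B A hgB (by rw [Set.inter_comm]; exact hV) h1 with h | h
          · exact Or.inr (Or.inl h)
          · exact Or.inr (Or.inr h)
        · exact Or.inr (Or.inl (Relation.ReflTransGen.head ⟨trivial, trivial, g, ⟨hg, hgB⟩, hends⟩ h2))
        · exact Or.inr (Or.inr ⟨h3.1.imp (hxz.trans) (hxz.trans), h3.2⟩)

lemma reach_to_sep (G : Multigraph V E) {A B : Set E} (hU : A ∪ B = Set.univ)
    {u w : V} (hV : G.verts A ∩ G.verts B ⊆ {u, w}) {F : Set E} {x y : V}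
    (hx : x ∈ G.verts A) (hy : y ∈ G.verts B) (h : G.Reach F Set.univ x y) :
    G.Reach F Set.univ x u ∨ G.Reach F Set.univ x w := by
  have sing : ∀ z : V, z ∈ ({u, w} : Set V) →
      G.Reach F Set.univ x z → G.Reach F Set.univ x u ∨ G.Reach F Set.univ x w := by
    intro z hz hxz
    rcases hz with rfl | hz
    · exact Or.inl hxz
    · rcases hz with rfl
      exact Or.inr hxz
  rcases reach_cross G hU hV F h with h1 | h2 | h3
  · rcases Relation.ReflTransGen.cases_head (reach_symm_s8 G _ h1) with heq | ⟨m, hm, _⟩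
    · exact sing x (hV ⟨hx, by rw [← heq]; exact hy⟩) .refl
    · have hyA : y ∈ G.verts A := by
        obtain ⟨_, _, e, he, hezm⟩ := hm
        exact mem_verts_left G he.2 hezm
      exact sing y (hV ⟨hyA, hy⟩) (reach_mono G Set.inter_subset_left h1)
  · rcases Relation.ReflTransGen.cases_head h2 with heq | ⟨m, hm, _⟩
    · exact sing x (hV ⟨hx, by rw [heq]; exact hy⟩) .refl
    · have hxB : x ∈ G.verts B := by
        obtain ⟨_, _, e, he, hezm⟩ := hm
        exact mem_verts_left G he.2 hezm
      exact sing x (hV ⟨hx, hxB⟩) .refl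
  · exact h3.1

lemma main_reach (G : Multigraph V E) {T : Set E}
    (hT1 : ∀ a b : V, G.Reach T Set.univ a b)
    {A B : Set E} (hU : A ∪ B = Set.univ) {u w : V}
    (hV : G.verts A ∩ G.verts B ⊆ {u, w})
    {f : E} (hfT : f ∈ T) (hfB : f ∈ B)
    (huw : G.Reach (T \ {f}) Set.univ u w)
    {e : E} (heA : e ∈ A) {a b : V} (hab : G.ends e = s(a, b)) :
    G.Reach (T \ {f}) Set.univ a b := by
  obtain ⟨p, q, hpq⟩ : ∃ p q, G.ends f = s(p, q) := by
    rcases Sym2.exists.mp ⟨G.ends f, rfl⟩ with ⟨p, q, h⟩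
    exact ⟨p, q, h⟩
  have haA : a ∈ G.verts A := mem_verts_left G heA hab
  have hbA : b ∈ G.verts A := mem_verts_right G heA hab
  have hpB : p ∈ G.verts B := mem_verts_left G hfB hpq
  have hqB : q ∈ G.verts B := mem_verts_right G hfB hpq
  have collapse : ∀ {x : V},
      G.Reach (T \ {f}) Set.univ x u ∨ G.Reach (T \ {f}) Set.univ x w →
      G.Reach (T \ {f}) Set.univ x u := fun h =>
    h.elim id (fun h => h.trans (reach_symm_s8 G _ huw))
  rcases reach_delete G hpq (hT1 a b) with h | ⟨h1, h2⟩ | ⟨h1, h2⟩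
  · exact h
  · have hau := collapse (reach_to_sep G hU hV haA hpB h1)
    have hbu := collapse (reach_to_sep G hU hV hbA hqB (reach_symm_s8 G _ h2))
    exact hau.trans (reach_symm_s8 G _ hbu)
  · have hau := collapse (reach_to_sep G hU hV haA hqB h1)
    have hbu := collapse (reach_to_sep G hU hV hbA hpB (reach_symm_s8 G _ h2))
    exact hau.trans (reach_symm_s8 G _ hbu)


end Multigraph

/-- For a 2-separation `(E1, E2)` with separating vertices `u, w` such that
the tree path `P_{u,w}(T)` lies in `E1`: fundamental paths of non-tree edges
of `E1` stay in `E1`, and fundamental paths of non-tree edges of `E2` stay in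
`E2 ∪ P_{u,w}(T)`. -/
theorem path_in_twosep_side {V E : Type} [Fintype V] [Fintype E]
    (G : Multigraph V E) (h2 : G.TutteConnected 2)
    (T : Set E) (hT : G.IsSpanningTree T)
    (E1 E2 : Set E) (u w : V) (hsep : G.IsTwoSep E1 E2 u w)
    (hpath : G.pathEdges T u w ⊆ E1) :
    (∀ e ∈ E1, e ∉ T → G.fundPath T e ⊆ E1) ∧
    (∀ e ∈ E2, e ∉ T → G.fundPath T e ⊆ E2 ∪ G.pathEdges T u w) := by
  obtain ⟨hUn, hDisj, -, -, -, hVerts⟩ := hsep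
  have hV1 : G.verts E1 ∩ G.verts E2 ⊆ {u, w} := hVerts.subset
  have hV2 : G.verts E2 ∩ G.verts E1 ⊆ {u, w} := by
    rw [Set.inter_comm]; exact hV1
  have hU2 : E2 ∪ E1 = Set.univ := by rw [Set.union_comm]; exact hUn
  constructor
  · intro e he1 _ f hf
    by_contra hf1
    have hfE2 : f ∈ E2 := by
      have : f ∈ E1 ∪ E2 := hUn ▸ Set.mem_univ f
      exact this.resolve_left hf1
    have huw : G.Reach (T \ {f}) Set.univ u w := by
      by_contra h
      exact hf1 (hpath ⟨hf.1, h⟩)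
    obtain ⟨a, b, hab⟩ : ∃ a b, G.ends e = s(a, b) := by
      rcases Sym2.exists.mp ⟨G.ends e, rfl⟩ with ⟨a, b, h⟩
      exact ⟨a, b, h⟩
    exact hf.2 a b hab (Multigraph.main_reach G hT.1 hUn hV1 hf.1 hfE2 huw he1 hab)
  · intro e he2 _ f hf
    by_cases hf2 : f ∈ E2
    · exact Or.inl hf2
    have hf1 : f ∈ E1 := by
      have : f ∈ E1 ∪ E2 := hUn ▸ Set.mem_univ f
      exact this.resolve_right hf2
    refine Or.inr ⟨hf.1, fun huw => ?_⟩
    obtain ⟨a, b, hab⟩ : ∃ a b, G.ends e = s(a, b) := by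
      rcases Sym2.exists.mp ⟨G.ends e, rfl⟩ with ⟨a, b, h⟩
      exact ⟨a, b, h⟩
    exact hf.2 a b hab (Multigraph.main_reach G hT.1 hU2 hV2 hf.1 hf1 huw he2 hab)
end
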